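/- arXiv:2210.09858 — 5 statements merged into one kernel-verified Lean document; each statement's English description precedes it below -/
import Mathlib

section
/- For an irreducible continuous-time Markov jump process on a finite state space with transition rates k(x,y) and unique stationary distribution ρ, and an antisymmetric function q(x,y) = -q(y,x) on pairs, the stationary dissipated power ⟨P⟩ = Σ_x ρ(x) Σ_y k(x,y) q(x,y) is nonnegative whenever q(x,y) = log(k(x,y)/k(y,x)). -/
open Finset

/-- Irreducibility of the rates: any two states are connected by a path of positive rates. -/
def IrreducibleRates {V : Type*} [Fintype V] (k : V → V → ℝ) : Prop :=
  ∀ x y : V, ∃ (n : ℕ) (c : ℕ → V), c 0 = x ∧ c n = y ∧ ∀ i < n, 0 < k (c i) (c (i + 1))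

/-! The stationary power splits as the entropy production `∑ J x y * log (J x y / J y x)` of the
stationary flux `J x y = ρ x * k x y`, minus `∑ J x y * (log ρ x - log ρ y)`. The latter vanishes
by stationarity, and the former is at least `∑ (J x y - J y x) = 0` by `log t ≥ 1 - 1/t`.
Stationarity makes the support of `ρ` closed under positive rates, so every flux that enters
a logarithm with a nonzero weight is positive in both directions. -/

theorem Real.sub_le_mul_log_sub_log {a b : ℝ} (ha : 0 ≤ a) (hb : 0 ≤ b) (hab : 0 < a → 0 < b) :
    a - b ≤ a * (Real.log a - Real.log b) := by
  rcases ha.eq_or_lt with rfl | ha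
  · simpa using hb
  have hb := hab ha
  have h := Real.one_sub_inv_le_log_of_pos (div_pos ha hb)
  rw [Real.log_div ha.ne' hb.ne', inv_div] at h
  calc a - b = a * (1 - b / a) := by field_simp
    _ ≤ a * (Real.log a - Real.log b) := mul_le_mul_of_nonneg_left h ha.le

section Stationary

variable {V : Type*} [Fintype V] {k : V → V → ℝ} {ρ : V → ℝ}

theorem sum_sum_mul_sub_eq_zero_of_stationary
    (hstat : ∀ x, ∑ y, k x y * ρ x = ∑ y, k y x * ρ y) (f : V → ℝ) :
    ∑ x, ∑ y, ρ x * k x y * (f x - f y) = 0 := by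
  have hout : ∑ x, ∑ y, ρ x * k x y * f x = ∑ x, f x * ∑ y, k x y * ρ x := by
    simp only [mul_sum]; exact sum_congr rfl fun _ _ => sum_congr rfl fun _ _ => by ring
  have hin : ∑ x, ∑ y, ρ x * k x y * f y = ∑ y, f y * ∑ x, k x y * ρ x := by
    rw [sum_comm]; simp only [mul_sum]
    exact sum_congr rfl fun _ _ => sum_congr rfl fun _ _ => by ring
  simp only [mul_sub, sum_sub_distrib, hout, hin, hstat, sub_self]

theorem pos_of_stationary (hk : ∀ x y, 0 ≤ k x y) (hρnn : ∀ x, 0 ≤ ρ x)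
    (hstat : ∀ x, ∑ y, k x y * ρ x = ∑ y, k y x * ρ y) {x y : V}
    (hx : 0 < ρ x) (hkxy : 0 < k x y) : 0 < ρ y := by
  refine (hρnn y).lt_of_ne' fun hy => ?_
  have hinflow : 0 < ∑ z, k z y * ρ z :=
    sum_pos' (fun z _ => mul_nonneg (hk z y) (hρnn z)) ⟨x, mem_univ x, mul_pos hkxy hx⟩
  simp [← hstat y, hy] at hinflow

variable (hk : ∀ x y, 0 ≤ k x y) (hksym : ∀ x y, 0 < k x y ↔ 0 < k y x)
  (hρnn : ∀ x, 0 ≤ ρ x) (hstat : ∀ x, ∑ y, k x y * ρ x = ∑ y, k y x * ρ y)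
include hk hksym hρnn hstat

theorem flux_pos_imp_reverse_flux_pos {x y : V} (h : 0 < ρ x * k x y) : 0 < ρ y * k y x := by
  have hx : 0 < ρ x := pos_of_mul_pos_left h (hk x y)
  have hkxy : 0 < k x y := pos_of_mul_pos_right h (hρnn x)
  exact mul_pos (pos_of_stationary hk hρnn hstat hx hkxy) ((hksym x y).mp hkxy)

theorem flux_mul_q_eq {q : V → V → ℝ}
    (hq : ∀ x y, 0 < k x y → q x y = Real.log (k x y / k y x)) (x y : V) :
    ρ x * k x y * q x y = ρ x * k x y * (Real.log (ρ x * k x y) - Real.log (ρ y * k y x))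
      - ρ x * k x y * (Real.log (ρ x) - Real.log (ρ y)) := by
  rcases (mul_nonneg (hρnn x) (hk x y)).eq_or_lt with h | h
  · simp [← h]
  have hx : 0 < ρ x := pos_of_mul_pos_left h (hk x y)
  have hkxy : 0 < k x y := pos_of_mul_pos_right h (hρnn x)
  have hy : 0 < ρ y := pos_of_stationary hk hρnn hstat hx hkxy
  have hkyx : 0 < k y x := (hksym x y).mp hkxy
  rw [hq x y hkxy, Real.log_div hkxy.ne' hkyx.ne', Real.log_mul hx.ne' hkxy.ne',
    Real.log_mul hy.ne' hkyx.ne']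
  ring

end Stationary

theorem stmt0_general {V : Type*} [Fintype V]
    (k : V → V → ℝ) (q : V → V → ℝ) (ρ : V → ℝ)
    (hk : ∀ x y, 0 ≤ k x y)
    (hksym : ∀ x y, 0 < k x y ↔ 0 < k y x)
    (hρnn : ∀ x, 0 ≤ ρ x)
    (hstat : ∀ x, ∑ y, k x y * ρ x = ∑ y, k y x * ρ y)
    (hq : ∀ x y, 0 < k x y → q x y = Real.log (k x y / k y x)) :
    0 ≤ ∑ x, ρ x * ∑ y, k x y * q x y := by
  have hflux_sum : ∑ x, ∑ y, (ρ x * k x y - ρ y * k y x) = 0 := by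
    simp only [sum_sub_distrib, sum_comm (f := fun x y => ρ y * k y x), sub_self]
  calc (0 : ℝ) = ∑ x, ∑ y, (ρ x * k x y - ρ y * k y x) := hflux_sum.symm
    _ ≤ ∑ x, ∑ y, ρ x * k x y * (Real.log (ρ x * k x y) - Real.log (ρ y * k y x)) :=
      sum_le_sum fun x _ => sum_le_sum fun y _ =>
        Real.sub_le_mul_log_sub_log (mul_nonneg (hρnn x) (hk x y)) (mul_nonneg (hρnn y) (hk y x))
          (flux_pos_imp_reverse_flux_pos hk hksym hρnn hstat)
    _ = ∑ x, ∑ y, ρ x * k x y * q x y := by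
      simp only [flux_mul_q_eq hk hksym hρnn hstat hq, sum_sub_distrib,
        sum_sum_mul_sub_eq_zero_of_stationary hstat, sub_zero]
    _ = ∑ x, ρ x * ∑ y, k x y * q x y := by simp only [mul_sum, mul_assoc]

/-- for an irreducible Markov jump process with stationary distribution ρ and
antisymmetric `q(x,y) = log (k(x,y)/k(y,x))`, the stationary dissipated power is nonnegative. -/
theorem stmt0 {V : Type*} [Fintype V] [Nonempty V]
    (k : V → V → ℝ) (q : V → V → ℝ) (ρ : V → ℝ)
    (hk : ∀ x y, 0 ≤ k x y)
    (hksym : ∀ x y, 0 < k x y ↔ 0 < k y x)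
    (hirr : IrreducibleRates k)
    (hρnn : ∀ x, 0 ≤ ρ x) (hρ1 : ∑ x, ρ x = 1)
    (hstat : ∀ x, ∑ y, k x y * ρ x = ∑ y, k y x * ρ y)
    (hqa : ∀ x y, q x y = - q y x)
    (hq : ∀ x y, 0 < k x y → q x y = Real.log (k x y / k y x)) :
    0 ≤ ∑ x, ρ x * ∑ y, k x y * q x y :=
  stmt0_general k q ρ hk hksym hρnn hstat hq
end

section
/- Kirchhoff's matrix-tree formula for stationary distributions: for an irreducible Markov jump process on a finite connected graph G with rates k(x,y) > 0 on edges, the stationary distribution is ρ(x) = w(x)/W, where w(x) = Σ_{T} w(T_x), the sum running over all spanning trees T of G, T_x denotes T with all edges oriented toward x, w(T_x) = Π_{(z,z') ∈ T_x} k(z,z'), and W = Σ_x w(x). That is, ρ so defined satisfies the stationary master equation Σ_y k(x,y) ρ(x) = Σ_y k(y,x) ρ(y) for all x. -/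
/-!
Multiplied by `W`, both sides of the balance equation at `x` are the total weight of the maps
`q : V → V` along edges of `G` under which every vertex eventually returns to `x`: spanning trees
rooted at `x` closed up by one edge out of `x`, so that `x` lies on the unique cycle. On the
outflow side such a `q` arises from a tree rooted at `x` and the extra edge `x → y = q x`; on the
inflow side from a tree rooted at `y` and the edge `y → x`, where `y` is recovered as the
predecessor of `x` on the cycle. Both correspondences are bijections that multiply weights by the
rate of the added edge.
-/

open Finset
open scoped Classical

variable {V : Type*} [Fintype V] [DecidableEq V]

/-- `p` encodes a spanning tree of `G` rooted at `r`, oriented toward the root: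
`p v` is the next vertex on the unique path from `v` to `r`. -/
def IsRootedTree (G : SimpleGraph V) (r : V) (p : V → V) : Prop :=
  p r = r ∧ (∀ v, v ≠ r → G.Adj v (p v)) ∧ ∀ v, ∃ n, p^[n] v = r

/-- Weight of an oriented (parent-map encoded) subgraph: product of the rates of its
directed edges. -/
noncomputable def wt (k : V → V → ℝ) (p : V → V) : ℝ :=
  ∏ v ∈ Finset.univ.filter (fun v => p v ≠ v), k v (p v)

/-- `w(x)`: total weight of all spanning trees of `G` rooted at (oriented toward) `x`. -/
noncomputable def treeSum (G : SimpleGraph V) (k : V → V → ℝ) (x : V) : ℝ :=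
  ∑ p ∈ Finset.univ.filter (fun p : V → V => IsRootedTree G x p), wt k p

/-- `W`: total weight of all rooted spanning trees of `G`. -/
noncomputable def W (G : SimpleGraph V) (k : V → V → ℝ) : ℝ :=
  ∑ x, treeSum G k x

open Function

section Iterate

variable {α : Type*} [DecidableEq α] {f : α → α} {a b v : α}

theorem iterate_update_of_forall_lt_ne {n : ℕ} (h : ∀ j < n, f^[j] v ≠ a) :
    (update f a b)^[n] v = f^[n] v := by
  induction n with
  | zero => rfl
  | succ n ih =>
    rw [iterate_succ_apply', iterate_succ_apply', ih fun j hj => h j (by omega),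
      update_of_ne (h n n.lt_succ_self)]

theorem exists_iterate_eq_and_update_iterate_eq (h : ∃ n, f^[n] v = a) :
    ∃ n, f^[n] v = a ∧ ∀ j ≤ n, (update f a b)^[j] v = f^[j] v :=
  ⟨Nat.find h, Nat.find_spec h, fun _ hj =>
    iterate_update_of_forall_lt_ne fun _ hi => Nat.find_min h (by omega)⟩

theorem exists_update_iterate_eq (h : ∃ n, f^[n] v = a) :
    ∃ n, (update f a b)^[n] v = a := by
  obtain ⟨n, hn, hagree⟩ := exists_iterate_eq_and_update_iterate_eq (b := b) h
  exact ⟨n, (hagree n le_rfl).trans hn⟩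

end Iterate

theorem wt_update_of_apply_eq_self (k : V → V → ℝ) {p : V → V} {r b : V} (hr : p r = r)
    (hb : b ≠ r) : wt k (update p r b) = k r b * wt k p := by
  have hsupp : univ.filter (fun v => update p r b v ≠ v)
      = insert r (univ.filter fun v => p v ≠ v) := by
    ext v
    by_cases hv : v = r
    · subst hv; simpa using hb
    · simp [hv]
  rw [wt, wt, hsupp, prod_insert (by simp [hr]), update_self]
  congr 1
  refine prod_congr rfl fun v hv => ?_
  rw [update_of_ne (by rintro rfl; simp [hr] at hv)]

def IsRootedUnicycle {α : Type*} (G : SimpleGraph α) (x : α) (q : α → α) : Prop :=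
  (∀ v, G.Adj v (q v)) ∧ ∀ v, ∃ n, q^[n] (q v) = x

noncomputable def cyclePred {α : Type*} (q : α → α) (x : α) : α :=
  q^[minimalPeriod q x - 1] x

section FunctionalGraph

variable {α : Type*} {G : SimpleGraph α} {p q : α → α} {r x y : α}

theorem apply_cyclePred (hx : x ∈ periodicPts q) : q (cyclePred q x) = x := by
  rw [cyclePred, ← iterate_succ_apply' q, Nat.succ_eq_add_one,
    Nat.sub_add_cancel (minimalPeriod_pos_of_mem_periodicPts hx), iterate_minimalPeriod]

namespace IsRootedTree

theorem eq_root_of_isPeriodicPt (hp : IsRootedTree G r p) {m : ℕ} {v : α} (hm : 0 < m)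
    (hv : IsPeriodicPt p m v) : v = r := by
  obtain ⟨n, hn⟩ := hp.2.2 v
  have hle : n ≤ m * n := Nat.le_mul_of_pos_left n hm
  calc v = p^[m * n] v := ((hv.mul_const n).eq).symm
    _ = p^[m * n - n] (p^[n] v) := by rw [← iterate_add_apply, Nat.sub_add_cancel hle]
    _ = r := by rw [hn, iterate_fixed hp.1]

theorem isRootedUnicycle_update [DecidableEq α] (hp : IsRootedTree G r p) (hr : G.Adj r x) :
    IsRootedUnicycle G x (update p r x) := by
  refine ⟨fun v => ?_, fun v => ?_⟩
  · by_cases hv : v = r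
    · subst hv; simpa using hr
    · simpa [update_of_ne hv] using hp.2.1 v hv
  · obtain ⟨n, hn⟩ := exists_update_iterate_eq (b := x) (hp.2.2 v)
    exact ⟨n, by rw [← iterate_succ_apply, iterate_succ_apply', hn, update_self]⟩

theorem cyclePred_update [DecidableEq α] (hp : IsRootedTree G r p) (hx : x ≠ r) :
    cyclePred (update p r x) x = r := by
  set q := update p r x with hq
  obtain ⟨n, hn, hagree⟩ := exists_iterate_eq_and_update_iterate_eq (b := x) (hp.2.2 x)
  have hqn : q^[n] x = r := (hagree n le_rfl).trans hn
  have hper : IsPeriodicPt q (n + 1) x := by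
    rw [IsPeriodicPt, IsFixedPt, iterate_succ_apply', hqn, hq, update_self]
  have hmin : minimalPeriod q x = n + 1 := by
    refine le_antisymm (hper.minimalPeriod_le n.succ_pos) (Nat.succ_le_of_lt ?_)
    by_contra! hle
    have hpos := hper.minimalPeriod_pos n.succ_pos
    refine hx (hp.eq_root_of_isPeriodicPt hpos ?_)
    rw [IsPeriodicPt, IsFixedPt, ← hagree _ hle, iterate_minimalPeriod]
  rw [cyclePred, hmin, Nat.add_sub_cancel, hqn]

end IsRootedTree

namespace IsRootedUnicycle

theorem mem_periodicPts (hq : IsRootedUnicycle G x q) : x ∈ periodicPts q := by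
  obtain ⟨n, hn⟩ := hq.2 x
  exact ⟨n + 1, n.succ_pos, by rw [IsPeriodicPt, IsFixedPt, iterate_succ_apply, hn]⟩

theorem of_iterate_eq (hq : IsRootedUnicycle G x q) {n : ℕ} (hn : q^[n] x = y) :
    IsRootedUnicycle G y q := by
  refine ⟨hq.1, fun v => ?_⟩
  obtain ⟨m, hm⟩ := hq.2 v
  exact ⟨n + m, by rw [iterate_add_apply, hm, hn]⟩

theorem isRootedTree_update_self [DecidableEq α] (hq : IsRootedUnicycle G x q) {n : ℕ} (hn : q^[n] x = y) :
    IsRootedTree G y (update q y y) := by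
  refine ⟨update_self .., fun v hv => by simpa [update_of_ne hv] using hq.1 v, fun v => ?_⟩
  obtain ⟨m, hm⟩ := (hq.of_iterate_eq hn).2 v
  exact exists_update_iterate_eq ⟨m + 1, by rwa [iterate_succ_apply]⟩

end IsRootedUnicycle

end FunctionalGraph

noncomputable def unicycleSum (G : SimpleGraph V) (k : V → V → ℝ) (x : V) : ℝ :=
  ∑ q ∈ univ.filter (IsRootedUnicycle G x), wt k q

section MasterEquation

variable {G : SimpleGraph V} {k : V → V → ℝ}

theorem outflow_eq_unicycleSum (hk0 : ∀ x y, ¬ G.Adj x y → k x y = 0) (x : V) :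
    ∑ y, k x y * treeSum G k x = unicycleSum G k x := by
  rw [← sum_filter_of_ne fun y _ h => by_contra fun hxy => h (by rw [hk0 x y hxy, zero_mul])]
  simp only [treeSum, mul_sum]
  rw [← sum_product', unicycleSum]
  refine sum_bij' (fun yp _ => update yp.2 x yp.1) (fun q _ => (q x, update q x x))
    ?_ ?_ ?_ ?_ ?_
  · rintro ⟨y, p⟩ hyp
    simp only [mem_product, mem_filter, mem_univ, true_and] at hyp ⊢
    obtain ⟨hxy, hp⟩ := hyp
    obtain ⟨n, hn⟩ := exists_update_iterate_eq (b := y) (hp.2.2 y)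
    exact (hp.isRootedUnicycle_update hxy).of_iterate_eq hn
  · intro q hq
    simp only [mem_product, mem_filter, mem_univ, true_and] at hq ⊢
    exact ⟨hq.1 x, hq.isRootedTree_update_self (n := 0) rfl⟩
  · rintro ⟨y, p⟩ hyp
    simp only [mem_product, mem_filter, mem_univ, true_and] at hyp
    simp [update_idem, hyp.2.1]
  · intro q _
    simp [update_idem]
  · rintro ⟨y, p⟩ hyp
    simp only [mem_product, mem_filter, mem_univ, true_and] at hyp
    exact (wt_update_of_apply_eq_self k hyp.2.1 hyp.1.ne').symm

theorem inflow_eq_unicycleSum (hk0 : ∀ x y, ¬ G.Adj x y → k x y = 0) (x : V) :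
    ∑ y, k y x * treeSum G k y = unicycleSum G k x := by
  rw [← sum_filter_of_ne fun y _ h => by_contra fun hyx => h (by rw [hk0 y x hyx, zero_mul])]
  simp only [treeSum, mul_sum]
  rw [sum_sigma', unicycleSum]
  refine sum_bij' (fun yp _ => update yp.2 yp.1 x)
    (fun q _ => ⟨cyclePred q x, update q (cyclePred q x) (cyclePred q x)⟩) ?_ ?_ ?_ ?_ ?_
  · rintro ⟨y, p⟩ hyp
    simp only [mem_sigma, mem_filter, mem_univ, true_and] at hyp ⊢
    exact hyp.2.isRootedUnicycle_update hyp.1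
  · intro q hq
    simp only [mem_sigma, mem_filter, mem_univ, true_and] at hq ⊢
    refine ⟨?_, hq.isRootedTree_update_self rfl⟩
    simpa [apply_cyclePred hq.mem_periodicPts] using hq.1 (cyclePred q x)
  · rintro ⟨y, p⟩ hyp
    simp only [mem_sigma, mem_filter, mem_univ, true_and] at hyp
    obtain ⟨hyx, hp⟩ := hyp
    simp [hp.cyclePred_update hyx.ne', update_idem, hp.1]
  · intro q hq
    simp only [mem_filter, mem_univ, true_and] at hq
    simp [update_idem, apply_cyclePred hq.mem_periodicPts]
  · rintro ⟨y, p⟩ hyp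
    simp only [mem_sigma, mem_filter, mem_univ, true_and] at hyp
    exact (wt_update_of_apply_eq_self k hyp.2.1 hyp.1.ne').symm

end MasterEquation

theorem stmt1_general (G : SimpleGraph V)
    (k : V → V → ℝ)
    (hk0 : ∀ x y, ¬ G.Adj x y → k x y = 0)
    (ρ : V → ℝ) (hρ : ∀ x, ρ x = treeSum G k x / W G k) :
    ∀ x, ∑ y, k x y * ρ x = ∑ y, k y x * ρ y := by
  intro x
  have hbalance : ∑ y, k x y * treeSum G k x = ∑ y, k y x * treeSum G k y :=
    (outflow_eq_unicycleSum hk0 x).trans (inflow_eq_unicycleSum hk0 x).symm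
  simp only [hρ, ← mul_div_assoc, ← sum_div, hbalance]

/-- Kirchhoff's matrix-tree formula: `ρ(x) = w(x)/W` satisfies the stationary
master equation. -/
theorem stmt1 (G : SimpleGraph V) (hG : G.Connected)
    (k : V → V → ℝ)
    (hk : ∀ x y, 0 < k x y ↔ G.Adj x y)
    (hk0 : ∀ x y, ¬ G.Adj x y → k x y = 0)
    (ρ : V → ℝ) (hρ : ∀ x, ρ x = treeSum G k x / W G k) :
    ∀ x, ∑ y, k x y * ρ x = ∑ y, k y x * ρ y :=
  stmt1_general G k hk0 ρ hρ
end

section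
/- Graphical formula for stationary dissipated power: for an irreducible Markov jump process on a finite connected graph with rates k and antisymmetric edge function q, the stationary average ⟨P⟩ = Σ_x ρ(x) Σ_y k(x,y) q(x,y) equals (1/W) Σ_{H̄ ∈ O(ℋ)} w(H̄) q(ℓ̄), where O(ℋ) is the set of all oriented spanning tree-loops of the graph, ℓ̄ is the oriented loop of H̄, q(ℓ̄) is the sum of q over the directed edges of ℓ̄, w(H̄) is the product of rates over all directed edges of H̄, and W is the total weight of rooted spanning trees. -/
open Finset
open scoped Classical

variable {V : Type*} [Fintype V] [DecidableEq V]

/-- `v` is a periodic point of `p` with positive period. -/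
def IsPer (p : V → V) (v : V) : Prop := ∃ n, 0 < n ∧ p^[n] v = v

/-- `p` encodes an oriented spanning tree-loop of `G`: every vertex has one outgoing edge
of `G` (so every vertex flows into a cycle, the trees being directed toward the loop), and
there is a single cycle (all periodic points lie on one orbit). -/
def IsSpanningTreeLoop (G : SimpleGraph V) (p : V → V) : Prop :=
  (∀ v, G.Adj v (p v)) ∧
  ∀ u v, IsPer p u → IsPer p v → ∃ m, p^[m] u = v

/-- `q(ℓ̄)`: sum of `q` over the directed edges of the oriented loop of `p`. -/
noncomputable def qLoop (q : V → V → ℝ) (p : V → V) : ℝ :=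
  ∑ v ∈ Finset.univ.filter (fun v => IsPer p v), q v (p v)

/-- `w(H̄)`: product of the rates over all directed edges of an oriented spanning
tree-loop. -/
noncomputable def wAll (k : V → V → ℝ) (p : V → V) : ℝ :=
  ∏ v, k v (p v)

/-!
Adding the edge `x → y` to a spanning tree rooted at `x` closes exactly one loop, through `x`,
and yields a spanning tree-loop with a marked vertex `x` on its loop; cutting the loop edge out
of the marked vertex undoes this. In parent-map form these are `update p x y` and
`update p v v`, and the weights satisfy `w(T_x) k(x, y) = w(H̄)`. Hence
`Σ_x w(T_x) Σ_y k(x, y) q(x, y)` is the sum of `w(H̄) q(v, p v)` over tree-loops `H̄` and loop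
vertices `v`, i.e. `Σ_H̄ w(H̄) q(ℓ̄)`; dividing by `W` turns the tree weights into `ρ`.
-/

open Function

section Iterate

variable {α : Type*} {p : α → α} {u v x : α}

theorem iterate_update_of_forall_ne [DecidableEq α] (c : α) {n : ℕ} (hn : ∀ j < n, p^[j] u ≠ x) :
    (update p x c)^[n] u = p^[n] u := by
  induction n with
  | zero => rfl
  | succ n ih =>
    rw [iterate_succ_apply', iterate_succ_apply', ih fun j hj => hn j (by omega),
      update_of_ne (hn n n.lt_succ_self)]

theorem exists_iterate_update_eq [DecidableEq α] (c : α) (h : ∃ n, p^[n] u = x) :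
    ∃ n, (update p x c)^[n] u = x :=
  ⟨Nat.find h, by
    rw [iterate_update_of_forall_ne c fun j hj => Nat.find_min h hj]
    exact Nat.find_spec h⟩

theorem IsPer.exists_iterate_eq (hv : IsPer p v) {a : ℕ} (ha : p^[a] v = x) :
    ∃ m, p^[m] x = v := by
  obtain ⟨d, hd, hper⟩ := hv
  refine ⟨d * a - a, ?_⟩
  rw [← ha, ← iterate_add_apply, Nat.sub_add_cancel (Nat.le_mul_of_pos_left a hd)]
  exact IsPeriodicPt.mul_const hper a

theorem exists_isPer_iterate [Finite α] (p : α → α) (u : α) : ∃ n, IsPer p (p^[n] u) := by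
  obtain ⟨m, n, heq, hne⟩ : ∃ m n, p^[m] u = p^[n] u ∧ m < n := by
    obtain ⟨m, n, heq, hne⟩ : ∃ m n, p^[m] u = p^[n] u ∧ m ≠ n := by
      simpa [Injective] using not_injective_infinite_finite (p^[·] u)
    rcases hne.lt_or_gt with hlt | hlt
    exacts [⟨m, n, heq, hlt⟩, ⟨n, m, heq.symm, hlt⟩]
  exact ⟨m, n - m, by omega, by rw [← iterate_add_apply, Nat.sub_add_cancel hne.le, heq]⟩

end Iterate

section TreeLoop

variable {α : Type*} [DecidableEq α] {G : SimpleGraph α} {p : α → α} {x y v : α}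

theorem IsRootedTree.isPer_update (hp : IsRootedTree G x p) : IsPer (update p x y) x := by
  obtain ⟨n, hn⟩ := exists_iterate_update_eq y (hp.2.2 y)
  exact ⟨n + 1, n.succ_pos, by rw [iterate_succ_apply, update_self, hn]⟩

theorem IsRootedTree.isSpanningTreeLoop_update (hp : IsRootedTree G x p) (hxy : G.Adj x y) :
    IsSpanningTreeLoop G (update p x y) := by
  refine ⟨fun w => ?_, fun u w _ hw => ?_⟩
  · rcases eq_or_ne w x with rfl | hwx
    · rwa [update_self]
    · rw [update_of_ne hwx]
      exact hp.2.1 w hwx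
  · obtain ⟨b, hb⟩ := exists_iterate_update_eq y (hp.2.2 u)
    obtain ⟨a, ha⟩ := exists_iterate_update_eq y (hp.2.2 w)
    obtain ⟨m, hm⟩ := hw.exists_iterate_eq ha
    exact ⟨m + b, by rw [iterate_add_apply, hb, hm]⟩

theorem IsSpanningTreeLoop.isRootedTree_update [Finite α] (hp : IsSpanningTreeLoop G p)
    (hv : IsPer p v) : IsRootedTree G v (update p v v) := by
  refine ⟨update_self v v p, fun u hu => ?_, fun u => exists_iterate_update_eq v ?_⟩
  · rw [update_of_ne hu]
    exact hp.1 u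
  · obtain ⟨n, hn⟩ := exists_isPer_iterate p u
    obtain ⟨m, hm⟩ := hp.2 _ v hn hv
    exact ⟨m + n, by rw [iterate_add_apply, hm]⟩

end TreeLoop

theorem IsRootedTree.wAll_update {G : SimpleGraph V} {x : V} {p : V → V}
    (hp : IsRootedTree G x p) (k : V → V → ℝ) (y : V) :
    wAll k (update p x y) = k x y * wt k p := by
  have hmoved : univ.filter (fun v => p v ≠ v) = univ.erase x := by
    ext v
    simp only [mem_filter, mem_univ, true_and, mem_erase, and_true]
    refine ⟨fun h hvx => h (hvx ▸ hp.1), fun hvx h => G.ne_of_adj (hp.2.1 v hvx) h.symm⟩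
  rw [wAll, wt, hmoved, ← mul_prod_erase _ _ (mem_univ x), update_self]
  congr 1
  exact prod_congr rfl fun v hv => by rw [update_of_ne (ne_of_mem_erase hv)]

noncomputable def rootedTreesWithEdge (G : SimpleGraph V) : Finset ((V × V) × (V → V)) :=
  univ.filter fun t => G.Adj t.1.1 t.1.2 ∧ IsRootedTree G t.1.1 t.2

noncomputable def markedTreeLoops (G : SimpleGraph V) : Finset ((V → V) × V) :=
  univ.filter fun s => IsSpanningTreeLoop G s.1 ∧ IsPer s.1 s.2

theorem sum_rootedTreesWithEdge_eq_sum_markedTreeLoops (G : SimpleGraph V)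
    (g : (V → V) × V → ℝ) :
    ∑ t ∈ rootedTreesWithEdge G, g (update t.2 t.1.1 t.1.2, t.1.1)
      = ∑ s ∈ markedTreeLoops G, g s := by
  refine sum_nbij' (fun t => (update t.2 t.1.1 t.1.2, t.1.1))
    (fun s => ((s.2, s.1 s.2), update s.1 s.2 s.2)) ?_ ?_ ?_ ?_ fun _ _ => rfl
  · rintro ⟨⟨x, y⟩, p⟩ ht
    simp only [rootedTreesWithEdge, markedTreeLoops, mem_filter, mem_univ, true_and] at ht ⊢
    exact ⟨ht.2.isSpanningTreeLoop_update ht.1, ht.2.isPer_update⟩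
  · rintro ⟨p, v⟩ hs
    simp only [rootedTreesWithEdge, markedTreeLoops, mem_filter, mem_univ, true_and] at hs ⊢
    exact ⟨hs.1.1 v, hs.1.isRootedTree_update hs.2⟩
  · rintro ⟨⟨x, y⟩, p⟩ ht
    simp only [rootedTreesWithEdge, mem_filter, mem_univ, true_and] at ht
    simp only [update_self, update_idem, Prod.mk.injEq, true_and]
    exact update_eq_self_iff.mpr ht.2.1.symm
  · rintro ⟨p, v⟩ -
    simp only [update_idem, update_eq_self]

section Sums

variable {G : SimpleGraph V} {k : V → V → ℝ}

theorem sum_treeSum_mul_sum (hk0 : ∀ a b, ¬ G.Adj a b → k a b = 0) (f : V → V → ℝ) :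
    ∑ x, treeSum G k x * ∑ y, k x y * f x y
      = ∑ t ∈ rootedTreesWithEdge G,
          wAll k (update t.2 t.1.1 t.1.2) * f t.1.1 t.1.2 := by
  rw [rootedTreesWithEdge, sum_filter, Fintype.sum_prod_type, Fintype.sum_prod_type]
  refine sum_congr rfl fun x _ => ?_
  rw [treeSum, sum_mul_sum, sum_comm]
  refine sum_congr rfl fun y _ => ?_
  by_cases hxy : G.Adj x y
  · simp only [hxy, true_and, sum_filter]
    refine sum_congr rfl fun p _ => ?_
    split_ifs with hp
    · rw [hp.wAll_update]
      ring
    · rfl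
  · simp [hxy, hk0 x y hxy]

theorem sum_wAll_mul_qLoop (q : V → V → ℝ) :
    ∑ p ∈ univ.filter (fun p : V → V => IsSpanningTreeLoop G p), wAll k p * qLoop q p
      = ∑ s ∈ markedTreeLoops G, wAll k s.1 * q s.2 (s.1 s.2) := by
  rw [markedTreeLoops, sum_filter, sum_filter, Fintype.sum_prod_type]
  refine sum_congr rfl fun p _ => ?_
  by_cases hp : IsSpanningTreeLoop G p
  · simp only [hp, true_and, if_true, qLoop, mul_sum, sum_filter, mul_ite, mul_zero]
  · simp [hp]

end Sums

theorem stmt9_general (G : SimpleGraph V)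
    (k : V → V → ℝ)
    (hk0 : ∀ a b, ¬ G.Adj a b → k a b = 0)
    (q : V → V → ℝ)
    (ρ : V → ℝ) (hρ : ∀ a, ρ a = treeSum G k a / W G k) :
    ∑ x, ρ x * ∑ y, k x y * q x y
      = (W G k)⁻¹ *
        ∑ p ∈ Finset.univ.filter (fun p : V → V => IsSpanningTreeLoop G p),
          wAll k p * qLoop q p := by
  calc ∑ x, ρ x * ∑ y, k x y * q x y
      = (W G k)⁻¹ * ∑ x, treeSum G k x * ∑ y, k x y * q x y := by
        simp only [hρ, div_eq_inv_mul, mul_assoc, mul_sum]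
    _ = _ := by
        rw [sum_treeSum_mul_sum hk0, sum_wAll_mul_qLoop,
          ← sum_rootedTreesWithEdge_eq_sum_markedTreeLoops G
            fun s => wAll k s.1 * q s.2 (s.1 s.2)]
        simp only [update_self]

/-- graphical formula for the stationary dissipated power:
`⟨P⟩ = (1/W) Σ_{H̄ ∈ O(ℋ)} w(H̄) q(ℓ̄)`. -/
theorem stmt9 (G : SimpleGraph V) (hG : G.Connected)
    (k : V → V → ℝ)
    (hk : ∀ a b, 0 < k a b ↔ G.Adj a b)
    (hk0 : ∀ a b, ¬ G.Adj a b → k a b = 0)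
    (q : V → V → ℝ) (hqa : ∀ a b, q a b = - q b a)
    (ρ : V → ℝ) (hρ : ∀ a, ρ a = treeSum G k a / W G k) :
    ∑ x, ρ x * ∑ y, k x y * q x y
      = (W G k)⁻¹ *
        ∑ p ∈ Finset.univ.filter (fun p : V → V => IsSpanningTreeLoop G p),
          wAll k p * qLoop q p :=
  stmt9_general G k hk0 q ρ hρ
end

section
/- Quasistatic limit of excess heat is geometric: consider parameters λ(t), t ∈ [0,1], smooth, and the slow protocol λ^ε(t) = λ(εt) on [0, 1/ε]. Let ρ^ε_t solve ∂_t ρ^ε_t = L†_{λ(εt)} ρ^ε_t with ρ^ε_0 = ρ^s_{λ(0)}. Then for any smooth family f_λ : V → ℝ, lim_{ε↓0} ∫_0^{1/ε} Σ_x f_{λ(εt)}(x)(ρ^ε_t(x) − ρ^s_{λ(εt)}(x)) dt = −∫_Γ dλ · Σ_x V_λ(x) ∇_λ ρ^s_λ(x), where V_λ solves L_λ V_λ = ⟨f_λ⟩^s_λ − f_λ with ⟨V_λ⟩^s_λ = 0, and Γ is the curve traced by λ. -/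
open Finset Filter Topology intervalIntegral

/-- Backward generator of the rates `k`. -/
noncomputable def Lmat {V : Type*} [Fintype V] [DecidableEq V] (k : V → V → ℝ) :
    Matrix V V ℝ :=
  Matrix.of fun a b => if a = b then -(∑ c, k a c) else k a b

namespace QS
variable {V : Type*} [Fintype V] [DecidableEq V]

lemma rowSum_Lmat (k : V → V → ℝ) (a : V) : ∑ b, Lmat k a b = -(k a a) := by
  have h1 : ∑ b, Lmat k a b
      = (-(∑ c, k a c)) + ∑ b ∈ Finset.univ.erase a, k a b := by
    rw [← Finset.add_sum_erase _ _ (Finset.mem_univ a)]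
    congr 1
    · simp [Lmat]
    · exact Finset.sum_congr rfl fun b hb => by
        simp [Lmat, Matrix.of_apply, if_neg (Ne.symm (Finset.mem_erase.1 hb).1)]
  rw [h1, ← Finset.add_sum_erase _ (k a) (Finset.mem_univ a)]
  ring

lemma sum_mulVecT (M : Matrix V V ℝ) (v : V → ℝ) :
    ∑ x, (M.transpose.mulVec v) x = ∑ y, v y * (∑ x, M y x) := by
  simp only [Matrix.mulVec, dotProduct, Matrix.transpose_apply, Finset.mul_sum]
  rw [Finset.sum_comm]
  exact Finset.sum_congr rfl fun y _ => Finset.sum_congr rfl fun x _ => mul_comm _ _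

lemma pairing (M : Matrix V V ℝ) (a b : V → ℝ) :
    ∑ x, M.mulVec a x * b x = ∑ x, a x * M.transpose.mulVec b x := by
  simp only [Matrix.mulVec, dotProduct, Matrix.transpose_apply, Finset.sum_mul,
    Finset.mul_sum]
  rw [Finset.sum_comm]
  exact Finset.sum_congr rfl fun y _ => Finset.sum_congr rfl fun x _ => by ring

lemma kdiag {k : V → V → ℝ} {ρ : V → ℝ} (hk : ∀ x y, 0 ≤ k x y) (hρ : ∀ x, 0 < ρ x)
    (hstat : (Lmat k).transpose.mulVec ρ = 0) : ∀ y, k y y = 0 := by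
  have h0 : ∑ x, (Lmat k).transpose.mulVec ρ x = 0 := by rw [hstat]; simp
  rw [sum_mulVecT] at h0
  simp only [rowSum_Lmat] at h0
  have h0' : ∑ y, ρ y * k y y = 0 := by
    have := neg_eq_zero.2 h0
    rw [← Finset.sum_neg_distrib] at this
    simpa [neg_neg] using this
  intro y
  have := (Finset.sum_eq_zero_iff_of_nonneg (fun x _ => mul_nonneg (hρ x).le (hk x x))).1 h0' y
    (Finset.mem_univ y)
  rcases mul_eq_zero.1 this with h | h
  · exact absurd h (hρ y).ne'
  · exact h

end QS

namespace QS2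
variable {V : Type*} [Fintype V] [DecidableEq V] [Nonempty V]

lemma mulVec_Lmat (k : V → V → ℝ) (hdiag : ∀ x, k x x = 0) (h : V → ℝ) (z : V) :
    (Lmat k).mulVec h z = ∑ b, k z b * (h b - h z) := by
  have h1 : (Lmat k).mulVec h z
      = (-(∑ c, k z c)) * h z + ∑ b ∈ Finset.univ.erase z, k z b * h b := by
    simp only [Matrix.mulVec, dotProduct]
    rw [← Finset.add_sum_erase _ _ (Finset.mem_univ z)]
    congr 1
    · simp [Lmat]
    · exact Finset.sum_congr rfl fun b hb => by
        simp [Lmat, if_neg (Ne.symm (Finset.mem_erase.1 hb).1)]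
  rw [h1, Finset.sum_erase _ (by rw [hdiag z]; ring)]
  simp only [mul_sub]
  rw [Finset.sum_sub_distrib, ← Finset.sum_mul]
  ring

lemma ker_eq_const {k : V → V → ℝ}
    (hk : ∀ x y, 0 ≤ k x y) (hdiag : ∀ x, k x x = 0) (hirr : IrreducibleRates k)
    (h : V → ℝ) (hh : (Lmat k).mulVec h = 0) : ∀ x y, h x = h y := by
  obtain ⟨x₀, -, hx₀⟩ := Finset.exists_max_image Finset.univ h
    ⟨Classical.arbitrary V, Finset.mem_univ _⟩
  have key : ∀ z, h z = h x₀ → ∀ y, 0 < k z y → h y = h x₀ := by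
    intro z hz y hky
    have hLz : ∑ b, k z b * (h b - h z) = 0 := by
      rw [← mulVec_Lmat k hdiag h z, hh]; rfl
    have hterm : ∀ b ∈ Finset.univ, k z b * (h b - h z) ≤ 0 := fun b _ =>
      mul_nonpos_of_nonneg_of_nonpos (hk z b)
        (by rw [hz]; exact sub_nonpos.2 (hx₀ b (Finset.mem_univ b)))
    have := (Finset.sum_eq_zero_iff_of_nonpos hterm).1 hLz y (Finset.mem_univ y)
    have hy : h y - h z = 0 := by
      rcases mul_eq_zero.1 this with hc | hc
      · exact absurd hc hky.ne'
      · exact hc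
    rw [← hz]; linarith [sub_eq_zero.1 hy]
  have hall : ∀ y, h y = h x₀ := by
    intro y
    obtain ⟨n, c, hc0, hcn, hpos⟩ := hirr x₀ y
    have : ∀ i, i ≤ n → h (c i) = h x₀ := by
      intro i
      induction i with
      | zero => intro _; rw [hc0]
      | succ j ih =>
          intro hj
          exact key (c j) (ih (Nat.le_of_succ_le hj)) (c (j+1)) (hpos j hj)
    rw [← hcn]; exact this n le_rfl
  intro x y; rw [hall x, hall y]

lemma kerT_unique {k : V → V → ℝ} {ρ : V → ℝ}
    (hk : ∀ x y, 0 ≤ k x y) (hdiag : ∀ x, k x x = 0) (hirr : IrreducibleRates k)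
    (hρ : ∀ x, 0 < ρ x)
    (hρstat : (Lmat k).transpose.mulVec ρ = 0)
    (v : V → ℝ) (hv : (Lmat k).transpose.mulVec v = 0) (hsum : ∑ x, v x = 0) : v = 0 := by
  classical
  set M := Lmat k with hM
  -- kernel of M is the constants
  have hone : M.mulVecLin (fun _ => (1:ℝ)) = 0 := by
    funext z
    simp only [Matrix.mulVecLin_apply]
    rw [show M.mulVec (fun _ => (1:ℝ)) z = ∑ b, k z b * ((1:ℝ) - 1) from
      mulVec_Lmat k hdiag _ z]
    simp
  have hkerM : LinearMap.ker M.mulVecLin = Submodule.span ℝ {(fun _ => (1:ℝ) : V → ℝ)} := by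
    apply le_antisymm
    · intro h hh
      have hc := ker_eq_const hk hdiag hirr h (by simpa using hh)
      have : h = (h (Classical.arbitrary V)) • (fun _ => (1:ℝ)) := by
        funext y; simp [hc y (Classical.arbitrary V)]
      rw [this]
      exact Submodule.smul_mem _ _ (Submodule.mem_span_singleton_self _)
    · rw [Submodule.span_singleton_le_iff_mem]
      exact LinearMap.mem_ker.2 hone
  have hone_ne : (fun _ => (1:ℝ) : V → ℝ) ≠ 0 := by
    intro h
    exact one_ne_zero (congrFun h (Classical.arbitrary V))
  have hdimM : Module.finrank ℝ (LinearMap.ker M.mulVecLin) = 1 := by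
    rw [hkerM]; exact finrank_span_singleton hone_ne
  have hrankT : M.transpose.rank = M.rank := Matrix.rank_transpose M
  have hrn : M.rank + Module.finrank ℝ (LinearMap.ker M.mulVecLin)
      = Module.finrank ℝ (V → ℝ) := by
    rw [Matrix.rank]
    exact LinearMap.finrank_range_add_finrank_ker M.mulVecLin
  have hrnT : M.transpose.rank + Module.finrank ℝ (LinearMap.ker M.transpose.mulVecLin)
      = Module.finrank ℝ (V → ℝ) := by
    rw [Matrix.rank]
    exact LinearMap.finrank_range_add_finrank_ker M.transpose.mulVecLin
  have hdimT : Module.finrank ℝ (LinearMap.ker M.transpose.mulVecLin) = 1 := by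
    rw [hrankT] at hrnT
    omega
  -- the kernel of Mᵀ is spanned by ρ
  have hρmem : ρ ∈ LinearMap.ker M.transpose.mulVecLin := by
    rw [LinearMap.mem_ker, Matrix.mulVecLin_apply]
    exact hρstat
  have hρne : ρ ≠ 0 := by
    intro h
    exact absurd (congrFun h (Classical.arbitrary V)) (hρ _).ne'
  have hspan : Submodule.span ℝ {ρ} = LinearMap.ker M.transpose.mulVecLin := by
    apply Submodule.eq_of_le_of_finrank_le
    · rw [Submodule.span_singleton_le_iff_mem]; exact hρmem
    · rw [hdimT, finrank_span_singleton hρne]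
  have hvmem : v ∈ Submodule.span ℝ {ρ} := by
    rw [hspan, LinearMap.mem_ker, Matrix.mulVecLin_apply]
    exact hv
  obtain ⟨c, hc⟩ := Submodule.mem_span_singleton.1 hvmem
  have hsρ : 0 < ∑ x, ρ x :=
    Finset.sum_pos (fun x _ => hρ x) ⟨Classical.arbitrary V, Finset.mem_univ _⟩
  have : c * ∑ x, ρ x = 0 := by
    rw [← hsum, ← hc]
    simp [Finset.mul_sum]
  have hc0 : c = 0 := by
    rcases mul_eq_zero.1 this with h | h
    · exact h
    · exact absurd h hsρ.ne'
  rw [← hc, hc0]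
  simp

lemma sum_mulVecT_eq_zero {k : V → V → ℝ} (hdiag : ∀ x, k x x = 0) (v : V → ℝ) :
    ∑ x, (Lmat k).transpose.mulVec v x = 0 := by
  rw [QS.sum_mulVecT]
  simp [QS.rowSum_Lmat, hdiag]

lemma Bdet_ne {k : V → V → ℝ} {ρ : V → ℝ}
    (hk : ∀ x y, 0 ≤ k x y) (hdiag : ∀ x, k x x = 0) (hirr : IrreducibleRates k)
    (hρ : ∀ x, 0 < ρ x) (hρ1 : ∑ x, ρ x = 1)
    (hρstat : (Lmat k).transpose.mulVec ρ = 0) :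
    ((Lmat k).transpose + Matrix.of (fun x _ => ρ x)).det ≠ 0 := by
  intro h0
  obtain ⟨v, hvne, hv⟩ := (Matrix.exists_mulVec_eq_zero_iff).2 h0
  have hBv : ∀ x, (Lmat k).transpose.mulVec v x + ρ x * ∑ y, v y = 0 := by
    intro x
    have := congrFun hv x
    rw [Matrix.add_mulVec] at this
    simpa [Matrix.mulVec, dotProduct, Finset.mul_sum] using this
  have hsum0 : ∑ y, v y = 0 := by
    have h1 : ∑ x, ((Lmat k).transpose.mulVec v x + ρ x * ∑ y, v y) = 0 := by
      simp [hBv]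
    rw [Finset.sum_add_distrib, sum_mulVecT_eq_zero hdiag, ← Finset.sum_mul, hρ1] at h1
    simpa using h1
  have hLv : (Lmat k).transpose.mulVec v = 0 := by
    funext x
    have := hBv x
    rw [hsum0] at this
    simpa using this
  exact hvne (kerT_unique hk hdiag hirr hρ hρstat v hLv hsum0)

end QS2

namespace QS3
variable {V : Type*} [Fintype V] [DecidableEq V]

lemma contDiff_det (M : ℝ → Matrix V V ℝ) (h : ∀ i j, ContDiff ℝ (⊤:ℕ∞) fun s => M s i j) :
    ContDiff ℝ (⊤:ℕ∞) fun s => (M s).det := by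
  have heq : (fun s => (M s).det)
      = fun s => ∑ σ : Equiv.Perm V, ((Equiv.Perm.sign σ : ℤ) : ℝ) * ∏ i, M s (σ i) i := by
    funext s; rw [Matrix.det_apply']
  rw [heq]
  apply ContDiff.sum
  intro σ _
  exact contDiff_const.mul (contDiff_prod (fun i _ => h (σ i) i))

lemma contDiff_cramer (M : ℝ → Matrix V V ℝ) (b : ℝ → V → ℝ)
    (hM : ∀ i j, ContDiff ℝ (⊤:ℕ∞) fun s => M s i j) (hb : ∀ i, ContDiff ℝ (⊤:ℕ∞) fun s => b s i)
    (x : V) : ContDiff ℝ (⊤:ℕ∞) fun s => Matrix.cramer (M s) (b s) x := by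
  have heq : (fun s => Matrix.cramer (M s) (b s) x)
      = fun s => ((M s).updateCol x (b s)).det := by
    funext s; rw [Matrix.cramer_apply]
  rw [heq]
  apply contDiff_det
  intro i j
  simp only [Matrix.updateCol_apply]
  by_cases hj : j = x
  · simpa [hj] using hb i
  · simpa [hj] using hM i j

end QS3

namespace QS4
variable {V : Type*} [Fintype V] [DecidableEq V]

lemma l1_bound (b C : ℝ) (hC : 0 ≤ C)
    (M : ℝ → Matrix V V ℝ)
    (hoff : ∀ t ∈ Set.Icc (0:ℝ) b, ∀ x y, x ≠ y → 0 ≤ M t x y)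
    (hrow : ∀ t ∈ Set.Icc (0:ℝ) b, ∀ x, ∑ y, M t x y = 0)
    (r g : ℝ → V → ℝ)
    (hr : ∀ t ∈ Set.Icc (0:ℝ) b, HasDerivAt r ((M t).transpose.mulVec (r t) + g t) t)
    (hg : ∀ t ∈ Set.Icc (0:ℝ) b, ∑ x, |g t x| ≤ C) :
    ∀ t ∈ Set.Icc (0:ℝ) b, (∑ x, |r t x|) ≤ (∑ x, |r 0 x|) + C * t := by
  set f : ℝ → ℝ := fun t => ∑ x, |r t x| with hfdef
  have hsumcont : Continuous (fun v : V → ℝ => ∑ x, |v x|) :=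
    continuous_finset_sum _ (fun x _ => (continuous_apply x).abs)
  have hf : ContinuousOn f (Set.Icc 0 b) := by
    intro t ht
    exact (hsumcont.continuousAt.comp (hr t ht).continuousAt).continuousWithinAt
  have key := le_gronwallBound_of_liminf_deriv_right_le (f := f) (f' := fun _ => C)
    (δ := f 0) (K := 0) (ε := C) (a := 0) (b := b) hf ?_ le_rfl
    (fun x _ => by simp)
  · intro t ht
    have := key t ht
    simp only [gronwallBound_K0, sub_zero] at this
    exact this
  · -- the liminf condition
    intro t ht rr hrr
    apply Filter.Eventually.frequently
    -- notation
    set u : V → ℝ := r t with hu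
    set d : V → ℝ := (M t).transpose.mulVec (r t) + g t with hd
    have ht' : t ∈ Set.Icc (0:ℝ) b := ⟨ht.1, ht.2.le⟩
    have hslope : ∀ x : V, Tendsto (slope (fun z => r z x) t) (𝓝[≠] t) (𝓝 (d x)) := by
      intro x
      exact hasDerivAt_iff_tendsto_slope.1 (hasDerivAt_pi.1 (hr t ht') x)
    have htend : Tendsto (fun z => ∑ x, |slope (fun w => r w x) t z - d x|) (𝓝[≠] t)
        (𝓝 0) := by
      have : Tendsto (fun z => ∑ x, |slope (fun w => r w x) t z - d x|) (𝓝[≠] t)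
          (𝓝 (∑ x : V, |d x - d x|)) :=
        tendsto_finset_sum _ (fun x _ => ((hslope x).sub tendsto_const_nhds).abs)
      simpa using this
    have hmono : 𝓝[>] t ≤ 𝓝[≠] t := nhdsWithin_mono t (fun z hz => ne_of_gt hz)
    have ev1 : ∀ᶠ z in 𝓝[>] t, ∑ x, |slope (fun w => r w x) t z - d x| < rr - C := by
      have := (htend.mono_left hmono)
      exact this.eventually_lt_const (by linarith)
    set D : ℝ := ∑ x, |M t x x| with hD
    have hD0 : 0 ≤ D := Finset.sum_nonneg (fun x _ => abs_nonneg _)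
    have hDx : ∀ x, |M t x x| ≤ D := fun x =>
      Finset.single_le_sum (fun y _ => abs_nonneg (M t y y)) (Finset.mem_univ x)
    set h₀ : ℝ := (D + 1)⁻¹ with hh₀
    have hh₀pos : 0 < h₀ := inv_pos.2 (by linarith)
    have ev2 : Set.Ioc t (t + h₀) ∈ 𝓝[>] t :=
      Ioc_mem_nhdsGT (by linarith)
    filter_upwards [ev1, ev2] with z hz1 hz2
    set hh : ℝ := z - t with hhh
    have hhpos : 0 < hh := by simp only [hhh]; linarith [hz2.1]
    have hhle : hh ≤ h₀ := by simp only [hhh]; linarith [hz2.2]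
    set N : Matrix V V ℝ := 1 + hh • M t with hN
    have hNpos : ∀ x y, 0 ≤ N x y := by
      intro x y
      by_cases hxy : x = y
      · subst hxy
        have h1 : N x x = 1 + hh * M t x x := by
          simp [hN, Matrix.add_apply, Matrix.one_apply, Matrix.smul_apply]
        rw [h1]
        have h2 : -(M t x x) ≤ D := (neg_le_abs _).trans (hDx x)
        have h3 : hh * (D + 1) ≤ 1 := by
          have h5 := mul_le_mul_of_nonneg_right hhle (by linarith : (0:ℝ) ≤ D + 1)
          rwa [inv_mul_cancel₀ (by linarith : (D:ℝ) + 1 ≠ 0)] at h5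
        have h4 := mul_le_mul_of_nonneg_left h2 hhpos.le
        nlinarith
      · have h1 : N x y = hh * M t x y := by
          simp [hN, Matrix.add_apply, Matrix.one_apply, Matrix.smul_apply, hxy]
        rw [h1]
        exact mul_nonneg hhpos.le (hoff t ht' x y hxy)
    have hNrow : ∀ x, ∑ y, N x y = 1 := by
      intro x
      have : ∑ y, N x y = (∑ y, (1 : Matrix V V ℝ) x y) + hh * ∑ y, M t x y := by
        simp [hN, Matrix.add_apply, Matrix.smul_apply, Finset.sum_add_distrib,
          Finset.mul_sum]
      rw [this, hrow t ht' x]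
      simp [Matrix.one_apply]
    have hNT : ∀ x, (N.transpose.mulVec u) x = u x + hh * ((M t).transpose.mulVec u) x := by
      intro x
      have hterm : ∀ y, N y x * u y = (if y = x then u y else 0) + hh * (M t y x * u y) := by
        intro y
        simp only [hN, Matrix.add_apply, Matrix.smul_apply, Matrix.one_apply, smul_eq_mul]
        by_cases hyx : y = x <;> simp [hyx] <;> ring
      simp only [Matrix.mulVec, dotProduct, Matrix.transpose_apply]
      rw [Finset.sum_congr rfl (fun y _ => hterm y), Finset.sum_add_distrib,
        Finset.sum_ite_eq' Finset.univ x u]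
      simp [Finset.mul_sum]
    have hNcontract : ∑ x, |(N.transpose.mulVec u) x| ≤ ∑ x, |u x| := by
      calc ∑ x, |(N.transpose.mulVec u) x|
          ≤ ∑ x, ∑ y, N y x * |u y| := by
            apply Finset.sum_le_sum
            intro x _
            calc |(N.transpose.mulVec u) x| ≤ ∑ y, |N y x * u y| := by
                  simpa [Matrix.mulVec, dotProduct, Matrix.transpose_apply]
                    using Finset.abs_sum_le_sum_abs (fun y => N y x * u y) Finset.univ
              _ = ∑ y, N y x * |u y| := Finset.sum_congr rfl fun y _ => by
                  rw [abs_mul, abs_of_nonneg (hNpos y x)]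
        _ = ∑ y, |u y| := by
            rw [Finset.sum_comm]
            exact Finset.sum_congr rfl fun y _ => by
              rw [← Finset.sum_mul, hNrow y, one_mul]
    -- now assemble
    have hz_ne : z ≠ t := ne_of_gt hz2.1
    have hrz : ∀ x, r z x = u x + hh * slope (fun w => r w x) t z := by
      intro x
      have hne : z - t ≠ 0 := sub_ne_zero.2 hz_ne
      rw [slope_def_field, hhh]
      field_simp
      rw [hu]; ring
    have hper : ∀ x, |r z x| ≤ |(N.transpose.mulVec u) x| + hh * |g t x|
        + hh * |slope (fun w => r w x) t z - d x| := by
      intro x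
      have h4 : u x + hh * d x = (N.transpose.mulVec u) x + hh * g t x := by
        rw [hNT x, hd]
        simp only [Pi.add_apply]
        ring
      have h5 : r z x = ((N.transpose.mulVec u) x + hh * g t x)
          + hh * (slope (fun w => r w x) t z - d x) := by
        rw [← h4, hrz x]; ring
      rw [h5]
      have h6 := abs_add_le ((N.transpose.mulVec u) x + hh * g t x)
        (hh * (slope (fun w => r w x) t z - d x))
      have h7 := abs_add_le ((N.transpose.mulVec u) x) (hh * g t x)
      rw [abs_mul, abs_of_pos hhpos] at h6
      rw [abs_mul, abs_of_pos hhpos] at h7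
      linarith
    have hfz : f z ≤ f t + hh * C + hh * (∑ x, |slope (fun w => r w x) t z - d x|) := by
      have h8 : f z ≤ (∑ x, |(N.transpose.mulVec u) x|) + hh * (∑ x, |g t x|)
          + hh * (∑ x, |slope (fun w => r w x) t z - d x|) := by
        calc f z = ∑ x, |r z x| := rfl
          _ ≤ ∑ x, (|(N.transpose.mulVec u) x| + hh * |g t x|
              + hh * |slope (fun w => r w x) t z - d x|) := Finset.sum_le_sum fun x _ => hper x
          _ = _ := by
              rw [Finset.sum_add_distrib, Finset.sum_add_distrib, Finset.mul_sum, Finset.mul_sum]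
      have hft : f t = ∑ x, |u x| := rfl
      have h9 := hg t ht'
      have h10 := mul_le_mul_of_nonneg_left h9 hhpos.le
      linarith
    have hlt : f z - f t < hh * rr := by
      have := mul_lt_mul_of_pos_left hz1 hhpos
      calc f z - f t ≤ hh * C + hh * (∑ x, |slope (fun w => r w x) t z - d x|) := by linarith
        _ < hh * C + hh * (rr - C) := by linarith
        _ = hh * rr := by ring
    calc (z - t)⁻¹ * (f z - f t) < (z - t)⁻¹ * (hh * rr) := by
          apply mul_lt_mul_of_pos_left hlt (inv_pos.2 _)
          simpa [hhh] using hhpos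
      _ = rr := by field_simp [hhh]; rfl

end QS4

/-- the quasistatic limit of the excess is geometric: for the slow protocol
`λ^ε(t) = λ(εt)`, `lim_{ε↓0} ∫_0^{1/ε} Σ_x f_{λ(εt)}(x)(ρ^ε_t(x) − ρ^s_{λ(εt)}(x)) dt
= −∫_Γ dλ · Σ_x V_λ(x) ∇_λ ρ^s_λ(x)` (the line integral over the curve `Γ` traced by `λ`,
written in the parametrization `s ↦ λ(s)`, `s ∈ [0,1]`). -/
theorem stmt16 {V : Type*} [Fintype V] [DecidableEq V] [Nonempty V]
    {E : Type*} [NormedAddCommGroup E] [NormedSpace ℝ E]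
    (lam : ℝ → E) (hlam : ContDiff ℝ (⊤ : ℕ∞) lam)
    (k : E → V → V → ℝ)
    (hksmooth : ∀ x y, ContDiff ℝ (⊤ : ℕ∞) (fun e => k e x y))
    (hkpos : ∀ e x y, 0 ≤ k e x y)
    (hirr : ∀ e, IrreducibleRates (k e))
    (f : E → V → ℝ) (hfsmooth : ∀ x, ContDiff ℝ (⊤ : ℕ∞) (fun e => f e x))
    (ρs : E → V → ℝ)
    (hρsmooth : ∀ x, ContDiff ℝ (⊤ : ℕ∞) (fun e => ρs e x))
    (hρpos : ∀ e x, 0 < ρs e x) (hρ1 : ∀ e, ∑ x, ρs e x = 1)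
    (hρstat : ∀ e, (Lmat (k e)).transpose.mulVec (ρs e) = 0)
    (Vq : E → V → ℝ)
    (hVsmooth : ∀ x, ContDiff ℝ (⊤ : ℕ∞) (fun e => Vq e x))
    (hPoisson : ∀ e, (Lmat (k e)).mulVec (Vq e)
      = fun x => (∑ y, ρs e y * f e y) - f e x)
    (hVcent : ∀ e, ∑ x, ρs e x * Vq e x = 0)
    (ρe : ℝ → ℝ → V → ℝ)   -- `ρe ε t` solves the time-dependent master equation
    (hinit : ∀ ε, 0 < ε → ρe ε 0 = ρs (lam 0))
    (hode : ∀ ε, 0 < ε → ∀ t ∈ Set.Icc (0:ℝ) ε⁻¹,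
      HasDerivAt (fun s => ρe ε s)
        ((Lmat (k (lam (ε * t)))).transpose.mulVec (ρe ε t)) t) :
    Tendsto
      (fun ε : ℝ => ∫ t in (0:ℝ)..ε⁻¹,
        ∑ x, f (lam (ε * t)) x * (ρe ε t x - ρs (lam (ε * t)) x))
      (𝓝[>] (0:ℝ))
      (𝓝 (- ∫ s in (0:ℝ)..1, ∑ x, Vq (lam s) x * deriv (fun u => ρs (lam u) x) s)) := by
  classical
  -- diagonal rates vanish
  have kd : ∀ e x, k e x x = 0 := fun e => QS.kdiag (hkpos e) (hρpos e) (hρstat e)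
  -- abbreviations
  set gv : ℝ → V → ℝ := fun s x => deriv (fun u => ρs (lam u) x) s with hgv
  have hρlsm : ∀ x, ContDiff ℝ (⊤:ℕ∞) (fun s => ρs (lam s) x) := fun x =>
    ((hρsmooth x).comp hlam).of_le (by simp)
  have hgd : ∀ x s, HasDerivAt (fun u => ρs (lam u) x) (gv s x) s := fun x s =>
    ((hρlsm x).differentiable (by simp)).differentiableAt.hasDerivAt
  have hgsmooth : ∀ x, ContDiff ℝ (⊤:ℕ∞) (fun s => gv s x) := fun x =>
    (contDiff_infty_iff_deriv.1 (hρlsm x)).2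
  have hgsum : ∀ s, ∑ x, gv s x = 0 := by
    intro s
    have h1 : HasDerivAt (fun u => ∑ x, ρs (lam u) x) (∑ x, gv s x) s :=
      HasDerivAt.fun_sum (fun x _ => hgd x s)
    have h2 : (fun u => ∑ x, ρs (lam u) x) = fun _ => (1:ℝ) :=
      funext (fun u => hρ1 (lam u))
    rw [h2] at h1
    exact h1.unique (hasDerivAt_const s 1)
  -- the corrector w
  set Bm : ℝ → Matrix V V ℝ := fun s =>
    (Lmat (k (lam s))).transpose + Matrix.of (fun x _ => ρs (lam s) x) with hBm
  have hBdet : ∀ s, (Bm s).det ≠ 0 := fun s =>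
    QS2.Bdet_ne (hkpos (lam s)) (kd (lam s)) (hirr (lam s)) (hρpos (lam s))
      (hρ1 (lam s)) (hρstat (lam s))
  set w : ℝ → V → ℝ := fun s => ((Bm s).det)⁻¹ • (Matrix.cramer (Bm s) (gv s)) with hw
  have hwB : ∀ s, (Bm s).mulVec (w s) = gv s := by
    intro s
    rw [hw]
    simp only [Matrix.mulVec_smul, Matrix.mulVec_cramer]
    rw [smul_smul, inv_mul_cancel₀ (hBdet s), one_smul]
  have hofv : ∀ s (v : V → ℝ) x, (Matrix.of (fun x _ => ρs (lam s) x)).mulVec v x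
      = ρs (lam s) x * ∑ y, v y := by
    intro s v x
    simp [Matrix.mulVec, dotProduct, Finset.mul_sum]
  have hBsplit : ∀ s (v : V → ℝ) x, (Bm s).mulVec v x
      = (Lmat (k (lam s))).transpose.mulVec v x + ρs (lam s) x * ∑ y, v y := by
    intro s v x
    simp only [hBm, Matrix.add_mulVec, Pi.add_apply]
    rw [hofv s v x]
  have hwsum : ∀ s, ∑ x, w s x = 0 := by
    intro s
    have h1 : ∑ x, (Bm s).mulVec (w s) x = ∑ x, gv s x := by rw [hwB s]
    rw [hgsum s] at h1
    rw [Finset.sum_congr rfl (fun x _ => hBsplit s (w s) x), Finset.sum_add_distrib,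
      QS2.sum_mulVecT_eq_zero (kd (lam s)), ← Finset.sum_mul, hρ1 (lam s), zero_add,
      one_mul] at h1
    exact h1
  have hwL : ∀ s, (Lmat (k (lam s))).transpose.mulVec (w s) = gv s := by
    intro s
    funext x
    have h1 := congrFun (hwB s) x
    rw [hBsplit s (w s) x, hwsum s, mul_zero, add_zero] at h1
    exact h1
  have hksm' : ∀ x y, ContDiff ℝ (⊤:ℕ∞) (fun s => k (lam s) x y) := fun x y =>
    ((hksmooth x y).comp hlam).of_le (by simp)
  have hBsm : ∀ i j, ContDiff ℝ (⊤:ℕ∞) fun s => Bm s i j := by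
    intro i j
    have h1 : (fun s => Bm s i j) = fun s =>
        (if j = i then -(∑ c, k (lam s) j c) else k (lam s) j i) + ρs (lam s) i := by
      funext s
      simp [hBm, Lmat, Matrix.add_apply, Matrix.transpose_apply]
    rw [h1]
    apply ContDiff.add
    · by_cases hji : j = i
      · simpa [hji] using (ContDiff.sum (fun c (_ : c ∈ Finset.univ) => hksm' j c)).neg
      · simpa [hji] using hksm' j i
    · exact ((hρsmooth i).comp hlam).of_le (by simp)
  have hwsmooth : ∀ x, ContDiff ℝ (⊤:ℕ∞) (fun s => w s x) := by
    intro x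
    have h1 : (fun s => w s x) = fun s =>
        ((Bm s).det)⁻¹ * Matrix.cramer (Bm s) (gv s) x := by
      funext s; simp [hw]
    rw [h1]
    exact ((QS3.contDiff_det Bm hBsm).inv hBdet).mul
      (QS3.contDiff_cramer Bm gv hBsm hgsmooth x)
  have bound_of_cont : ∀ (φ : ℝ → V → ℝ), (∀ x, Continuous fun s => φ s x) →
      ∃ C, ∀ s ∈ Set.Icc (0:ℝ) 1, ∑ x, |φ s x| ≤ C := by
    intro φ hφ
    have hc : ContinuousOn (fun s => ∑ x, |φ s x|) (Set.Icc (0:ℝ) 1) :=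
      (continuous_finset_sum _ (fun x _ => (hφ x).abs)).continuousOn
    obtain ⟨C, hC⟩ := isCompact_Icc.exists_bound_of_continuousOn hc
    exact ⟨C, fun s hs => (le_abs_self _).trans (by simpa [Real.norm_eq_abs] using hC s hs)⟩
  have hwd : ∀ x s, HasDerivAt (fun u => w u x) (deriv (fun u => w u x) s) s := fun x s =>
    (((hwsmooth x).differentiable (by simp)) s).hasDerivAt
  -- compactness constants
  obtain ⟨Cw, hCw⟩ : ∃ C, ∀ s ∈ Set.Icc (0:ℝ) 1, ∑ x, |w s x| ≤ C :=
    bound_of_cont w (fun x => (hwsmooth x).continuous)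
  obtain ⟨Cw', hCw'⟩ : ∃ C, ∀ s ∈ Set.Icc (0:ℝ) 1,
      ∑ x, |deriv (fun u => w u x) s| ≤ C :=
    bound_of_cont (fun s x => deriv (fun u => w u x) s)
      (fun x => ((contDiff_infty_iff_deriv.1 (hwsmooth x)).2).continuous)
  obtain ⟨CV, hCV⟩ : ∃ C, ∀ s ∈ Set.Icc (0:ℝ) 1, ∑ x, |Vq (lam s) x| ≤ C :=
    bound_of_cont (fun s x => Vq (lam s) x)
      (fun x => ((hVsmooth x).comp hlam).continuous)
  obtain ⟨CdV, hCdV⟩ : ∃ C, ∀ s ∈ Set.Icc (0:ℝ) 1,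
      ∑ x, |deriv (fun u => Vq (lam u) x) s| ≤ C :=
    bound_of_cont (fun s x => deriv (fun u => Vq (lam u) x) s)
      (fun x => ((contDiff_infty_iff_deriv.1
        (((hVsmooth x).comp hlam).of_le (by simp))).2).continuous)
  have hCw0 : 0 ≤ Cw := le_trans (Finset.sum_nonneg fun x _ => abs_nonneg _)
    (hCw 0 ⟨le_rfl, zero_le_one⟩)
  have hCw'0 : 0 ≤ Cw' := le_trans (Finset.sum_nonneg fun x _ => abs_nonneg _)
    (hCw' 0 ⟨le_rfl, zero_le_one⟩)
  have hCV0 : 0 ≤ CV := le_trans (Finset.sum_nonneg fun x _ => abs_nonneg _)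
    (hCV 0 ⟨le_rfl, zero_le_one⟩)
  have hCdV0 : 0 ≤ CdV := le_trans (Finset.sum_nonneg fun x _ => abs_nonneg _)
    (hCdV 0 ⟨le_rfl, zero_le_one⟩)
  set Cδ : ℝ := 2 * Cw + Cw' with hCδ
  set T : ℝ := - ∫ s in (0:ℝ)..1, ∑ x, Vq (lam s) x * gv s x with hT
  set K : ℝ := CV * Cδ + CdV * Cδ with hK
  -- the main quantitative bound
  have main : ∀ ε : ℝ, 0 < ε →
      |(∫ t in (0:ℝ)..ε⁻¹,
          ∑ x, f (lam (ε * t)) x * (ρe ε t x - ρs (lam (ε * t)) x)) - T| ≤ K * ε := by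
    intro ε hε
    have hb : (0:ℝ) < ε⁻¹ := inv_pos.2 hε
    have hεb : ε * ε⁻¹ = 1 := mul_inv_cancel₀ hε.ne'
    have hεt : ∀ t ∈ Set.Icc (0:ℝ) ε⁻¹, ε * t ∈ Set.Icc (0:ℝ) 1 := by
      intro t ht
      refine ⟨mul_nonneg hε.le ht.1, ?_⟩
      calc ε * t ≤ ε * ε⁻¹ := mul_le_mul_of_nonneg_left ht.2 hε.le
        _ = 1 := hεb
    have contAt_sum : ∀ (φ : V → ℝ → ℝ) (t : ℝ), (∀ x, ContinuousAt (φ x) t) →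
        ContinuousAt (fun u => ∑ x, φ x u) t := by
      intro φ t hφ
      exact tendsto_finset_sum _ (fun x _ => hφ x)
    -- mass conservation
    have hmass : ∀ t ∈ Set.Icc (0:ℝ) ε⁻¹, ∑ x, ρe ε t x = 1 := by
      have hcont : ContinuousOn (fun t => ∑ x, ρe ε t x) (Set.Icc 0 ε⁻¹) := by
        intro t ht
        exact (contAt_sum _ t (fun x =>
          ((continuous_apply x).continuousAt.comp (hode ε hε t ht).continuousAt))).continuousWithinAt
      have hder : ∀ t ∈ Set.Ico (0:ℝ) ε⁻¹,
          HasDerivWithinAt (fun t => ∑ x, ρe ε t x) 0 (Set.Ici t) t := by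
        intro t ht
        have h1 : HasDerivAt (fun t => ∑ x, ρe ε t x)
            (∑ x, (Lmat (k (lam (ε*t)))).transpose.mulVec (ρe ε t) x) t :=
          HasDerivAt.fun_sum (fun x _ => hasDerivAt_pi.1 (hode ε hε t ⟨ht.1, ht.2.le⟩) x)
        rw [QS2.sum_mulVecT_eq_zero (kd (lam (ε*t)))] at h1
        exact h1.hasDerivWithinAt
      intro t ht
      have h2 := constant_of_has_deriv_right_zero hcont hder t ht
      rw [h2, hinit ε hε, hρ1 (lam 0)]
    -- the chain rule helper
    have hchain : ∀ (φ : ℝ → ℝ) (d : ℝ) (t : ℝ), HasDerivAt φ d (ε*t) →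
        HasDerivAt (fun u => φ (ε*u)) (ε*d) t := by
      intro φ d t hφ
      have h1 : HasDerivAt (fun u : ℝ => ε * u) ε t := by
        simpa using (hasDerivAt_id t).const_mul ε
      have h2 := HasDerivAt.comp t hφ h1
      rw [mul_comm] at h2
      exact h2
    -- the remainder r
    set rr : ℝ → V → ℝ := fun t => ρe ε t - ρs (lam (ε*t)) - ε • (w (ε*t)) with hrrdef
    have hrrx : ∀ t x, rr t x = ρe ε t x - ρs (lam (ε*t)) x - ε * w (ε*t) x := fun t x => rfl
    have hrrd : ∀ t ∈ Set.Icc (0:ℝ) ε⁻¹, HasDerivAt rr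
        ((Lmat (k (lam (ε*t)))).transpose.mulVec (rr t)
          + (-(ε^2)) • (fun x => deriv (fun u => w u x) (ε*t))) t := by
      intro t ht
      apply hasDerivAt_pi.2
      intro x
      have h1 : HasDerivAt (fun u => ρe ε u x)
          ((Lmat (k (lam (ε*t)))).transpose.mulVec (ρe ε t) x) t :=
        hasDerivAt_pi.1 (hode ε hε t ht) x
      have h2 : HasDerivAt (fun u => ρs (lam (ε*u)) x) (ε * gv (ε*t) x) t :=
        hchain _ _ t (hgd x (ε*t))
      have h3 : HasDerivAt (fun u => w (ε*u) x) (ε * deriv (fun u => w u x) (ε*t)) t :=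
        hchain _ _ t (hwd x (ε*t))
      have h4 : HasDerivAt (fun u => rr u x)
          ((Lmat (k (lam (ε*t)))).transpose.mulVec (ρe ε t) x - ε * gv (ε*t) x
            - ε * (ε * deriv (fun u => w u x) (ε*t))) t := by
        exact (h1.sub h2).sub (h3.const_mul ε)
      have h5 : (Lmat (k (lam (ε*t)))).transpose.mulVec (rr t) x
          = (Lmat (k (lam (ε*t)))).transpose.mulVec (ρe ε t) x - ε * gv (ε*t) x := by
        have h6 : rr t = ρe ε t - ρs (lam (ε*t)) - ε • w (ε*t) := rfl
        rw [h6, Matrix.mulVec_sub, Matrix.mulVec_sub, Matrix.mulVec_smul, hρstat (lam (ε*t)),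
          hwL (ε*t)]
        simp [smul_eq_mul]
      have h7 : ((Lmat (k (lam (ε*t)))).transpose.mulVec (rr t)
          + (-(ε^2)) • (fun x => deriv (fun u => w u x) (ε*t))) x
          = (Lmat (k (lam (ε*t)))).transpose.mulVec (ρe ε t) x - ε * gv (ε*t) x
            - ε * (ε * deriv (fun u => w u x) (ε*t)) := by
        simp only [Pi.add_apply, Pi.smul_apply, smul_eq_mul, h5]
        ring
      rw [h7]
      exact h4
    have hM_off : ∀ t ∈ Set.Icc (0:ℝ) ε⁻¹, ∀ x y, x ≠ y → 0 ≤ Lmat (k (lam (ε*t))) x y := by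
      intro t ht x y hxy
      simpa [Lmat, hxy] using hkpos (lam (ε*t)) x y
    have hM_row : ∀ t ∈ Set.Icc (0:ℝ) ε⁻¹, ∀ x, ∑ y, Lmat (k (lam (ε*t))) x y = 0 := by
      intro t ht x
      rw [QS.rowSum_Lmat, kd, neg_zero]
    have hgεbound : ∀ t ∈ Set.Icc (0:ℝ) ε⁻¹,
        ∑ x, |((-(ε^2)) • (fun x => deriv (fun u => w u x) (ε*t))) x| ≤ ε^2 * Cw' := by
      intro t ht
      have h1 : ∀ x, |((-(ε^2)) • (fun x => deriv (fun u => w u x) (ε*t))) x|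
          = ε^2 * |deriv (fun u => w u x) (ε*t)| := by
        intro x
        simp only [Pi.smul_apply, smul_eq_mul, abs_mul, abs_neg, abs_of_nonneg (sq_nonneg ε)]
      rw [Finset.sum_congr rfl (fun x _ => h1 x), ← Finset.mul_sum]
      exact mul_le_mul_of_nonneg_left (hCw' _ (hεt t ht)) (sq_nonneg ε)
    have hrbound := QS4.l1_bound ε⁻¹ (ε^2 * Cw') (mul_nonneg (sq_nonneg ε) hCw'0)
      (fun t => Lmat (k (lam (ε*t)))) hM_off hM_row rr
      (fun t => (-(ε^2)) • (fun x => deriv (fun u => w u x) (ε*t))) hrrd hgεbound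
    have hr0 : ∀ x, rr 0 x = -(ε * w 0 x) := by
      intro x
      rw [hrrx 0 x, mul_zero, hinit ε hε]
      simp
    have hr0sum : ∑ x, |rr 0 x| ≤ ε * Cw := by
      rw [Finset.sum_congr rfl (fun x _ => by rw [hr0 x, abs_neg, abs_mul, abs_of_pos hε]),
        ← Finset.mul_sum]
      exact mul_le_mul_of_nonneg_left (hCw 0 ⟨le_rfl, zero_le_one⟩) hε.le
    have hδbound : ∀ t ∈ Set.Icc (0:ℝ) ε⁻¹,
        ∑ x, |ρe ε t x - ρs (lam (ε*t)) x| ≤ ε * Cδ := by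
      intro t ht
      have hstep1 : ∑ x, |ρe ε t x - ρs (lam (ε*t)) x| ≤ ∑ x, (|rr t x| + ε * |w (ε*t) x|) := by
        apply Finset.sum_le_sum
        intro x _
        have h1 : ρe ε t x - ρs (lam (ε*t)) x = rr t x + ε * w (ε*t) x := by
          rw [hrrx t x]; ring
        rw [h1]
        calc |rr t x + ε * w (ε*t) x| ≤ |rr t x| + |ε * w (ε*t) x| := abs_add_le _ _
          _ = |rr t x| + ε * |w (ε*t) x| := by rw [abs_mul, abs_of_pos hε]
      have hstep2 : ∑ x, (|rr t x| + ε * |w (ε*t) x|)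
          = (∑ x, |rr t x|) + ε * ∑ x, |w (ε*t) x| := by
        rw [Finset.sum_add_distrib, Finset.mul_sum]
      have h3 := hrbound t ht
      have h4 := hCw _ (hεt t ht)
      have h5 : ε^2 * Cw' * t ≤ ε * Cw' := by
        have h6 : ε^2 * Cw' * t ≤ ε^2 * Cw' * ε⁻¹ :=
          mul_le_mul_of_nonneg_left ht.2 (mul_nonneg (sq_nonneg ε) hCw'0)
        calc ε^2 * Cw' * t ≤ ε^2 * Cw' * ε⁻¹ := h6
          _ = (ε * ε⁻¹) * (ε * Cw') := by ring
          _ = ε * Cw' := by rw [hεb, one_mul]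
      have h7 := mul_le_mul_of_nonneg_left h4 hε.le
      rw [hCδ]
      calc ∑ x, |ρe ε t x - ρs (lam (ε*t)) x| ≤ (∑ x, |rr t x|) + ε * ∑ x, |w (ε*t) x| := by
            rw [← hstep2]; exact hstep1
        _ ≤ ((∑ x, |rr 0 x|) + ε^2 * Cw' * t) + ε * Cw := by
            exact add_le_add h3 h7
        _ ≤ ((ε * Cw) + ε * Cw') + ε * Cw := by
            exact add_le_add (add_le_add hr0sum h5) le_rfl
        _ = ε * (2 * Cw + Cw') := by ring
    -- auxiliary functions for the integral identity
    set Pf : ℝ → ℝ := fun t => ∑ x, Vq (lam (ε*t)) x * (ρe ε t x - ρs (lam (ε*t)) x) with hPf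
    set Qf : ℝ → ℝ := fun t => ∑ x, deriv (fun u => Vq (lam u) x) (ε*t)
        * (ρe ε t x - ρs (lam (ε*t)) x) with hQf
    set Sf : ℝ → ℝ := fun t => ∑ x, Vq (lam (ε*t)) x *
        ((Lmat (k (lam (ε*t)))).transpose.mulVec (ρe ε t) x - ε * gv (ε*t) x) with hSf
    set Rf : ℝ → ℝ := fun t => ∑ x, Vq (lam (ε*t)) x * gv (ε*t) x with hRf
    have hVlsm : ∀ x, ContDiff ℝ (⊤:ℕ∞) (fun s => Vq (lam s) x) := fun x =>
      ((hVsmooth x).comp hlam).of_le (by simp)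
    have hVd : ∀ x s, HasDerivAt (fun u => Vq (lam u) x) (deriv (fun u => Vq (lam u) x) s) s :=
      fun x s => (((hVlsm x).differentiable (by simp)) s).hasDerivAt
    have hcompε : ∀ {g : ℝ → ℝ}, Continuous g → Continuous fun t => g (ε*t) := by
      intro g hg
      exact hg.comp (continuous_const.mul continuous_id)
    -- derivative of Pf
    have hPd : ∀ t ∈ Set.Icc (0:ℝ) ε⁻¹, HasDerivAt Pf (ε * Qf t + Sf t) t := by
      intro t ht
      have hterm : ∀ x : V, HasDerivAt
          (fun u => Vq (lam (ε*u)) x * (ρe ε u x - ρs (lam (ε*u)) x))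
          ((ε * deriv (fun u => Vq (lam u) x) (ε*t)) * (ρe ε t x - ρs (lam (ε*t)) x)
            + Vq (lam (ε*t)) x *
              ((Lmat (k (lam (ε*t)))).transpose.mulVec (ρe ε t) x - ε * gv (ε*t) x)) t := by
        intro x
        have h1 : HasDerivAt (fun u => Vq (lam (ε*u)) x)
            (ε * deriv (fun u => Vq (lam u) x) (ε*t)) t := hchain _ _ t (hVd x (ε*t))
        have h2 : HasDerivAt (fun u => ρe ε u x - ρs (lam (ε*u)) x)
            ((Lmat (k (lam (ε*t)))).transpose.mulVec (ρe ε t) x - ε * gv (ε*t) x) t :=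
          (hasDerivAt_pi.1 (hode ε hε t ht) x).sub (hchain _ _ t (hgd x (ε*t)))
        exact h1.mul h2
      have hsum := HasDerivAt.fun_sum (fun x (_ : x ∈ Finset.univ) => hterm x)
      have heq : ∑ x, ((ε * deriv (fun u => Vq (lam u) x) (ε*t))
            * (ρe ε t x - ρs (lam (ε*t)) x)
          + Vq (lam (ε*t)) x *
            ((Lmat (k (lam (ε*t)))).transpose.mulVec (ρe ε t) x - ε * gv (ε*t) x))
          = ε * Qf t + Sf t := by
        simp only [hQf, hSf]
        rw [Finset.mul_sum, ← Finset.sum_add_distrib]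
        exact Finset.sum_congr rfl fun x _ => by ring
      rw [heq] at hsum
      exact hsum
    -- the pointwise algebraic identity
    have hdlsum : ∀ t ∈ Set.Icc (0:ℝ) ε⁻¹, ∑ x, (ρe ε t x - ρs (lam (ε*t)) x) = 0 := by
      intro t ht
      rw [Finset.sum_sub_distrib, hmass t ht, hρ1 (lam (ε*t))]
      ring
    have hFS : ∀ t ∈ Set.Icc (0:ℝ) ε⁻¹,
        ∑ x, f (lam (ε*t)) x * (ρe ε t x - ρs (lam (ε*t)) x)
          = -(ε * Qf t + Sf t) + (ε * Qf t - ε * Rf t) := by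
      intro t ht
      have hfx : ∀ x, f (lam (ε*t)) x = (∑ y, ρs (lam (ε*t)) y * f (lam (ε*t)) y)
          - (Lmat (k (lam (ε*t)))).mulVec (Vq (lam (ε*t))) x := by
        intro x
        have h1 := congrFun (hPoisson (lam (ε*t))) x
        rw [h1]
        ring
      have h2 : ∑ x, f (lam (ε*t)) x * (ρe ε t x - ρs (lam (ε*t)) x)
          = (∑ y, ρs (lam (ε*t)) y * f (lam (ε*t)) y)
              * (∑ x, (ρe ε t x - ρs (lam (ε*t)) x))
            - ∑ x, (Lmat (k (lam (ε*t)))).mulVec (Vq (lam (ε*t))) x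
              * (ρe ε t x - ρs (lam (ε*t)) x) := by
        rw [Finset.mul_sum, ← Finset.sum_sub_distrib]
        exact Finset.sum_congr rfl fun x _ => by rw [hfx x]; ring
      have h5 := QS.pairing (Lmat (k (lam (ε*t)))) (Vq (lam (ε*t)))
        (fun x => ρe ε t x - ρs (lam (ε*t)) x)
      have h3 : (Lmat (k (lam (ε*t)))).transpose.mulVec
          (fun x => ρe ε t x - ρs (lam (ε*t)) x)
          = (Lmat (k (lam (ε*t)))).transpose.mulVec (ρe ε t) := by
        have h4 : (fun x => ρe ε t x - ρs (lam (ε*t)) x) = ρe ε t - ρs (lam (ε*t)) := rfl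
        rw [h4, Matrix.mulVec_sub, hρstat (lam (ε*t))]
        simp
      rw [h3] at h5
      have hSR : Sf t + ε * Rf t
          = ∑ x, Vq (lam (ε*t)) x * (Lmat (k (lam (ε*t)))).transpose.mulVec (ρe ε t) x := by
        simp only [hSf, hRf]
        rw [Finset.mul_sum, ← Finset.sum_add_distrib]
        exact Finset.sum_congr rfl fun x _ => by ring
      rw [h2, hdlsum t ht, mul_zero, zero_sub]
      linarith [h5, hSR]
    -- continuity of all the integrands on [0, 1/ε]
    have hcontρex : ∀ t ∈ Set.Icc (0:ℝ) ε⁻¹, ∀ x, ContinuousAt (fun u => ρe ε u x) t :=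
      fun t ht x => (continuous_apply x).continuousAt.comp (hode ε hε t ht).continuousAt
    have hcontdl : ∀ t ∈ Set.Icc (0:ℝ) ε⁻¹, ∀ x,
        ContinuousAt (fun u => ρe ε u x - ρs (lam (ε*u)) x) t := by
      intro t ht x
      exact (hcontρex t ht x).sub (hcompε ((hρlsm x).continuous)).continuousAt
    have hcontLρe : ∀ t ∈ Set.Icc (0:ℝ) ε⁻¹, ∀ x, ContinuousAt
        (fun u => (Lmat (k (lam (ε*u)))).transpose.mulVec (ρe ε u) x) t := by
      intro t ht x
      have h1 : ∀ y, ContinuousAt (fun u => Lmat (k (lam (ε*u))) y x * ρe ε u y) t := by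
        intro y
        have h2 : Continuous (fun u => Lmat (k (lam (ε*u))) y x) := by
          have h3 : (fun u => Lmat (k (lam (ε*u))) y x)
              = fun u => if y = x then -(∑ c, k (lam (ε*u)) y c) else k (lam (ε*u)) y x := by
            funext u; simp [Lmat]
          rw [h3]
          by_cases hyx : y = x
          · simp only [if_pos hyx]; exact
              (continuous_finset_sum Finset.univ (fun c _ =>
                hcompε ((hksmooth y c).comp hlam).continuous)).neg
          · simpa [hyx] using hcompε ((hksmooth y x).comp hlam).continuous
        exact h2.continuousAt.mul (hcontρex t ht y)
      exact contAt_sum (fun y u => Lmat (k (lam (ε*u))) y x * ρe ε u y) t h1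
    have hQcont : ContinuousOn Qf (Set.Icc (0:ℝ) ε⁻¹) := by
      intro t ht
      apply ContinuousAt.continuousWithinAt
      apply contAt_sum
      intro x
      exact ((hcompε ((contDiff_infty_iff_deriv.1 (hVlsm x)).2).continuous).continuousAt).mul
        (hcontdl t ht x)
    have hRcont : ContinuousOn Rf (Set.Icc (0:ℝ) ε⁻¹) := by
      intro t ht
      apply ContinuousAt.continuousWithinAt
      apply contAt_sum
      intro x
      exact ((hcompε ((hVlsm x).continuous)).continuousAt).mul
        ((hcompε ((hgsmooth x).continuous)).continuousAt)
    have hQScont : ContinuousOn (fun t => ε * Qf t + Sf t) (Set.Icc (0:ℝ) ε⁻¹) := by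
      apply ContinuousOn.add
      · exact continuousOn_const.mul hQcont
      · intro t ht
        apply ContinuousAt.continuousWithinAt
        apply contAt_sum
        intro x
        exact ((hcompε ((hVlsm x).continuous)).continuousAt).mul
          ((hcontLρe t ht x).sub
            ((continuous_const.mul (hcompε ((hgsmooth x).continuous))).continuousAt))
    have huIcc : Set.uIcc (0:ℝ) ε⁻¹ = Set.Icc 0 ε⁻¹ := Set.uIcc_of_le hb.le
    have hQScontI : IntervalIntegrable (fun t => ε * Qf t + Sf t)
        MeasureTheory.volume 0 ε⁻¹ :=
      (huIcc ▸ hQScont).intervalIntegrable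
    have hQcontI : IntervalIntegrable Qf MeasureTheory.volume 0 ε⁻¹ :=
      (huIcc ▸ hQcont).intervalIntegrable
    have hRcontI : IntervalIntegrable Rf MeasureTheory.volume 0 ε⁻¹ :=
      (huIcc ▸ hRcont).intervalIntegrable
    have hFTC : ∫ t in (0:ℝ)..ε⁻¹, (ε * Qf t + Sf t) = Pf ε⁻¹ - Pf 0 :=
      intervalIntegral.integral_eq_sub_of_hasDerivAt
        (fun t ht => hPd t (huIcc ▸ ht)) hQScontI
    have hIeq : (∫ t in (0:ℝ)..ε⁻¹, ∑ x, f (lam (ε * t)) x * (ρe ε t x - ρs (lam (ε * t)) x))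
        = -(Pf ε⁻¹ - Pf 0) + (ε * ∫ t in (0:ℝ)..ε⁻¹, Qf t) - ε * ∫ t in (0:ℝ)..ε⁻¹, Rf t := by
      rw [intervalIntegral.integral_congr (g := fun t => -(ε * Qf t + Sf t)
        + (ε * Qf t - ε * Rf t)) (fun t ht => hFS t (huIcc ▸ ht))]
      have hnegI : IntervalIntegrable (fun t => -(ε * Qf t + Sf t))
          MeasureTheory.volume 0 ε⁻¹ := hQScontI.neg
      have hQmulI : IntervalIntegrable (fun t => ε * Qf t) MeasureTheory.volume 0 ε⁻¹ :=
        hQcontI.const_mul ε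
      have hRmulI : IntervalIntegrable (fun t => ε * Rf t) MeasureTheory.volume 0 ε⁻¹ :=
        hRcontI.const_mul ε
      have hsubI : IntervalIntegrable (fun t => ε * Qf t - ε * Rf t)
          MeasureTheory.volume 0 ε⁻¹ := hQmulI.sub hRmulI
      rw [intervalIntegral.integral_add hnegI hsubI]
      rw [intervalIntegral.integral_neg, hFTC,
        intervalIntegral.integral_sub hQmulI hRmulI,
        intervalIntegral.integral_const_mul, intervalIntegral.integral_const_mul]
      ring
    have hPf0 : Pf 0 = 0 := by
      simp [hPf, hinit ε hε]
    have hRint : ε * (∫ t in (0:ℝ)..ε⁻¹, Rf t)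
        = ∫ s in (0:ℝ)..1, ∑ x, Vq (lam s) x * gv s x := by
      have h1 : (∫ t in (0:ℝ)..ε⁻¹, Rf t)
          = ∫ t in (0:ℝ)..ε⁻¹, (fun s => ∑ x, Vq (lam s) x * gv s x) (ε * t) := rfl
      rw [h1, intervalIntegral.integral_comp_mul_left
        (fun s => ∑ x, Vq (lam s) x * gv s x) hε.ne', mul_zero, hεb, smul_eq_mul]
      rw [← mul_assoc, mul_inv_cancel₀ hε.ne', one_mul]
    -- the bounds
    have hVle : ∀ s ∈ Set.Icc (0:ℝ) 1, ∀ x, |Vq (lam s) x| ≤ CV := fun s hs x =>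
      (Finset.single_le_sum (fun y (_ : y ∈ Finset.univ) => abs_nonneg (Vq (lam s) y))
        (Finset.mem_univ x)).trans (hCV s hs)
    have hdVle : ∀ s ∈ Set.Icc (0:ℝ) 1, ∀ x, |deriv (fun u => Vq (lam u) x) s| ≤ CdV :=
      fun s hs x =>
      (Finset.single_le_sum (fun y (_ : y ∈ Finset.univ) =>
          abs_nonneg (deriv (fun u => Vq (lam u) y) s))
        (Finset.mem_univ x)).trans (hCdV s hs)
    have habsle : ∀ (a : V → ℝ) (c : ℝ) (dd : V → ℝ), (∀ x, |a x| ≤ c) →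
        |∑ x, a x * dd x| ≤ c * ∑ x, |dd x| := by
      intro a c dd ha
      calc |∑ x, a x * dd x| ≤ ∑ x, |a x * dd x| :=
            Finset.abs_sum_le_sum_abs _ _
        _ ≤ ∑ x, c * |dd x| := by
            apply Finset.sum_le_sum
            intro x _
            rw [abs_mul]
            exact mul_le_mul_of_nonneg_right (ha x) (abs_nonneg _)
        _ = c * ∑ x, |dd x| := by rw [Finset.mul_sum]
    have hPb : |Pf ε⁻¹| ≤ CV * (ε * Cδ) := by
      have h1 : ε * ε⁻¹ ∈ Set.Icc (0:ℝ) 1 := hεt ε⁻¹ ⟨hb.le, le_rfl⟩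
      have h2 := habsle (fun x => Vq (lam (ε*ε⁻¹)) x) CV
        (fun x => ρe ε ε⁻¹ x - ρs (lam (ε*ε⁻¹)) x) (hVle _ h1)
      calc |Pf ε⁻¹| ≤ CV * ∑ x, |ρe ε ε⁻¹ x - ρs (lam (ε*ε⁻¹)) x| := h2
        _ ≤ CV * (ε * Cδ) :=
            mul_le_mul_of_nonneg_left (hδbound ε⁻¹ ⟨hb.le, le_rfl⟩) hCV0
    have hQb : |∫ t in (0:ℝ)..ε⁻¹, Qf t| ≤ (CdV * (ε * Cδ)) * |ε⁻¹ - 0| := by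
      rw [← Real.norm_eq_abs]
      apply intervalIntegral.norm_integral_le_of_norm_le_const
      intro t ht
      have ht' : t ∈ Set.Icc (0:ℝ) ε⁻¹ := by
        rw [Set.uIoc_of_le hb.le] at ht
        exact ⟨ht.1.le, ht.2⟩
      have h2 := habsle (fun x => deriv (fun u => Vq (lam u) x) (ε*t)) CdV
        (fun x => ρe ε t x - ρs (lam (ε*t)) x) (hdVle _ (hεt t ht'))
      calc ‖Qf t‖ = |Qf t| := rfl
        _ ≤ CdV * ∑ x, |ρe ε t x - ρs (lam (ε*t)) x| := h2
        _ ≤ CdV * (ε * Cδ) := mul_le_mul_of_nonneg_left (hδbound t ht') hCdV0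
    -- put everything together
    rw [hIeq, hPf0, hRint, hT]
    have hCδ0 : 0 ≤ Cδ := by rw [hCδ]; linarith
    have habs : |(-(Pf ε⁻¹ - 0) + ε * (∫ t in (0:ℝ)..ε⁻¹, Qf t)
          - (∫ s in (0:ℝ)..1, ∑ x, Vq (lam s) x * gv s x))
        - (- ∫ s in (0:ℝ)..1, ∑ x, Vq (lam s) x * gv s x)|
        = |(-(Pf ε⁻¹)) + ε * (∫ t in (0:ℝ)..ε⁻¹, Qf t)| := by
      congr 1
      ring
    rw [habs]
    have h8 : |ε * (∫ t in (0:ℝ)..ε⁻¹, Qf t)| ≤ CdV * Cδ * ε := by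
      rw [abs_mul, abs_of_pos hε]
      have h9 := mul_le_mul_of_nonneg_left hQb hε.le
      calc ε * |∫ t in (0:ℝ)..ε⁻¹, Qf t| ≤ ε * ((CdV * (ε * Cδ)) * |ε⁻¹ - 0|) := h9
        _ = (ε * ε⁻¹) * (CdV * (ε * Cδ)) := by
            rw [sub_zero, abs_of_pos hb]; ring
        _ = CdV * Cδ * ε := by rw [hεb]; ring
    calc |(-(Pf ε⁻¹)) + ε * (∫ t in (0:ℝ)..ε⁻¹, Qf t)|
        ≤ |(-(Pf ε⁻¹))| + |ε * (∫ t in (0:ℝ)..ε⁻¹, Qf t)| := abs_add_le _ _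
      _ ≤ CV * (ε * Cδ) + CdV * Cδ * ε := by
          rw [abs_neg]
          exact add_le_add hPb h8
      _ = K * ε := by rw [hK]; ring
  -- conclude
  have htendsub : Tendsto (fun ε : ℝ =>
      (∫ t in (0:ℝ)..ε⁻¹,
        ∑ x, f (lam (ε * t)) x * (ρe ε t x - ρs (lam (ε * t)) x)) - T)
      (𝓝[>] (0:ℝ)) (𝓝 0) := by
    apply squeeze_zero_norm'
    · filter_upwards [self_mem_nhdsWithin] with ε hε
      exact main ε hε
    · have : Tendsto (fun ε : ℝ => K * ε) (𝓝 (0:ℝ)) (𝓝 (K * 0)) :=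
        (continuous_const.mul continuous_id).tendsto 0
      rw [mul_zero] at this
      exact this.mono_left nhdsWithin_le_nhds
  have := htendsub.add (tendsto_const_nhds (x := T) (f := 𝓝[>] (0:ℝ)))
  rw [zero_add] at this
  have hfun : (fun ε : ℝ => (∫ t in (0:ℝ)..ε⁻¹,
      ∑ x, f (lam (ε * t)) x * (ρe ε t x - ρs (lam (ε * t)) x)) - T + T)
      = fun ε : ℝ => ∫ t in (0:ℝ)..ε⁻¹,
      ∑ x, f (lam (ε * t)) x * (ρe ε t x - ρs (lam (ε * t)) x) := by
    funext ε; ring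
  rw [hfun] at this
  have hTeq : T = - ∫ s in (0:ℝ)..1, ∑ x, Vq (lam s) x * deriv (fun u => ρs (lam u) x) s := by
    rw [hT, hgv]
  rw [hTeq] at this
  exact this
end

section
/- Forest expansion of the power sum: for a finite connected graph with rates k, antisymmetric q, and spanning 2-forest sets ℱ^{x→y} (one tree rooted at y containing x, the other rooted arbitrarily), one has Σ_y w(ℱ^{x→y}) P(y) = Σ_{z,y} Σ_{F ∈ ℱ^{x→y}, (z,y) ∉ F} w(F) k(y,z) q(y,z) for every vertex x, where P(y) = Σ_z k(y,z) q(y,z): terms where the reversed edge (z,y) lies in the forest cancel pairwise by antisymmetry of q. -/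
/-!
Reversing the edge `z → y` of a forest in `ℱ^{x→y}` (so that `y` points to `z` and `z`
becomes the root) gives a forest in `ℱ^{x→z}` containing `y → z`, and doing it twice gives
back the original forest. The weights satisfy `w(F) k(y,z) = w(F') k(z,y)`, so by
antisymmetry of `q` the terms of `F` and `F'` in the power-sum expansion cancel (for
`z = y` the term vanishes since `q y y = 0`).
-/

open Finset
open scoped Classical

variable {V : Type*} [Fintype V] [DecidableEq V]

/-- `p` encodes a spanning 2-forest of `G`, one tree rooted at `z` containing `x`, the
other tree rooted arbitrarily. -/
def IsTwoForestTo (G : SimpleGraph V) (x z : V) (p : V → V) : Prop :=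
  p z = z ∧
  (∃ r, r ≠ z ∧ p r = r ∧ ∀ v, p v = v → v = z ∨ v = r) ∧
  (∀ v, p v ≠ v → G.Adj v (p v)) ∧
  (∀ v, ∃ n, p (p^[n] v) = p^[n] v) ∧
  (∃ n, p^[n] x = z)

/-- `w(ℱ^{x→z})`. -/
noncomputable def forestSum (G : SimpleGraph V) (k : V → V → ℝ) (x z : V) : ℝ :=
  ∑ p ∈ Finset.univ.filter (fun p : V → V => IsTwoForestTo G x z p), wt k p

def reroot {α : Type*} [DecidableEq α] (p : α → α) (y z : α) : α → α :=
  fun v => if v = z then z else if v = y then z else p v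

section Reroot

variable {α : Type*} [DecidableEq α] {p : α → α} {y z v : α}

theorem reroot_apply_of_ne (hy : v ≠ y) (hz : v ≠ z) : reroot p y z v = p v := by
  simp [reroot, hy, hz]

@[simp]
theorem reroot_apply_right : reroot p y z z = z := by
  simp [reroot]

@[simp]
theorem reroot_apply_left : reroot p y z y = z := by
  by_cases h : y = z <;> simp [reroot, h]

theorem reroot_reroot (hy : p y = y) (hz : p z = y) : reroot (reroot p y z) z y = p := by
  funext v
  by_cases hvy : v = y
  · subst hvy; simp [reroot, hy]
  by_cases hvz : v = z
  · subst hvz; simp [reroot, hvy, hz]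
  rw [reroot_apply_of_ne hvz hvy, reroot_apply_of_ne hvy hvz]

theorem reroot_self (hy : p y = y) : reroot p y y = p := by
  funext v
  by_cases hvy : v = y
  · subst hvy; simp [hy]
  · exact reroot_apply_of_ne hvy hvy

theorem exists_iterate_reroot (p : α → α) (y z : α) (m : ℕ) (v : α) :
    ∃ N, (reroot p y z)^[N] v = z ∨ ((reroot p y z)^[N] v = p^[m] v ∧ p^[m] v ≠ y) := by
  induction m generalizing v with
  | zero =>
    by_cases hvy : v = y
    · exact ⟨1, Or.inl (by simp [hvy])⟩
    · exact ⟨0, Or.inr ⟨rfl, hvy⟩⟩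
  | succ m ih =>
    by_cases hvz : v = z
    · exact ⟨0, Or.inl hvz⟩
    by_cases hvy : v = y
    · exact ⟨1, Or.inl (by simp [hvy])⟩
    obtain ⟨N, hN⟩ := ih (p v)
    refine ⟨N + 1, ?_⟩
    rwa [Function.iterate_succ_apply, Function.iterate_succ_apply,
      reroot_apply_of_ne hvy hvz]

theorem IsTwoForestTo.reroot {G : SimpleGraph α} {x : α}
    (h : IsTwoForestTo G x y p) (hz : p z = y) (hzy : z ≠ y) :
    IsTwoForestTo G x z (reroot p y z) := by
  obtain ⟨hy, ⟨r, hry, hr, hroots⟩, hadj, hreach, n, hxy⟩ := h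
  have hrz : r ≠ z := by rintro rfl; exact hzy (hr.symm.trans hz)
  refine ⟨reroot_apply_right, ⟨r, hrz, by rw [reroot_apply_of_ne hry hrz, hr], ?_⟩, ?_, ?_, ?_⟩
  · intro v hv
    by_cases hvz : v = z
    · exact Or.inl hvz
    by_cases hvy : v = y
    · rw [hvy, reroot_apply_left] at hv
      exact absurd hv hzy
    rw [reroot_apply_of_ne hvy hvz] at hv
    exact Or.inr ((hroots v hv).resolve_left hvy)
  · intro v hv
    by_cases hvz : v = z
    · subst hvz; exact absurd reroot_apply_right hv
    by_cases hvy : v = y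
    · subst hvy
      rw [reroot_apply_left]
      exact (hz ▸ hadj z (hz ▸ hzy.symm)).symm
    rw [reroot_apply_of_ne hvy hvz] at hv ⊢
    exact hadj v hv
  · intro v
    obtain ⟨m, hm⟩ := hreach v
    obtain ⟨N, hN | ⟨hN, hne⟩⟩ := exists_iterate_reroot p y z m v
    · exact ⟨N, by rw [hN, reroot_apply_right]⟩
    · refine ⟨N, ?_⟩
      rcases hroots _ hm with h | h
      · exact absurd h hne
      · rw [hN, h, reroot_apply_of_ne hry hrz, hr]
  · obtain ⟨N, hN | ⟨-, hne⟩⟩ := exists_iterate_reroot p y z n x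
    · exact ⟨N, hN⟩
    · exact absurd hxy hne

end Reroot

theorem wt_mul_eq_wt_reroot_mul (k : V → V → ℝ) {p : V → V} {y z : V}
    (hy : p y = y) (hz : p z = y) (hzy : z ≠ y) :
    wt k p * k y z = wt k (reroot p y z) * k z y := by
  set S := univ.filter (fun v => p v ≠ v)
  have hzS : z ∈ S := by simp [S, hz, hzy.symm]
  have hyS' : y ∈ univ.filter (fun v => reroot p y z v ≠ v) := by simp [hzy]
  have hS' : (univ.filter (fun v => reroot p y z v ≠ v)).erase y = S.erase z := by
    ext v
    simp only [S, mem_erase, mem_filter, mem_univ, true_and]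
    by_cases hvz : v = z
    · simp [hvz]
    by_cases hvy : v = y
    · simp [hvy, hy]
    simp [reroot_apply_of_ne hvy hvz, hvz, hvy]
  have hrest : ∏ v ∈ S.erase z, k v (reroot p y z v) = ∏ v ∈ S.erase z, k v (p v) := by
    refine prod_congr rfl fun v hv => ?_
    have hvy : v ≠ y := by rintro rfl; simp [S, hy] at hv
    rw [reroot_apply_of_ne hvy (ne_of_mem_erase hv)]
  rw [wt, wt, ← mul_prod_erase S _ hzS, ← mul_prod_erase _ _ hyS', hS', hrest, hz,
    reroot_apply_left]
  ring

theorem sum_forest_reversed_edge_eq_zero (G : SimpleGraph V) (k q : V → V → ℝ)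
    (hq : ∀ a b, q a b = - q b a) (x : V) :
    ∑ y, ∑ z, ∑ p ∈ univ.filter (fun p : V → V => IsTwoForestTo G x y p ∧ p z = y),
      wt k p * k y z * q y z = 0 := by
  have hq_self : ∀ a, q a a = 0 := fun a => by linarith [hq a a]
  simp only [sum_filter]
  rw [← Fintype.sum_prod_type', ← Fintype.sum_prod_type', ← sum_filter]
  refine sum_involution (fun t _ => ((t.1.2, t.1.1), reroot t.2 t.1.1 t.1.2)) ?_ ?_ ?_ ?_
  · rintro ⟨⟨y, z⟩, p⟩ ht
    simp only [mem_filter, mem_univ, true_and] at ht ⊢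
    obtain rfl | hzy := eq_or_ne z y
    · simp [hq_self]
    linear_combination q y z * wt_mul_eq_wt_reroot_mul k ht.1.1 ht.2 hzy
      + wt k (reroot p y z) * k z y * hq z y
  · rintro ⟨⟨y, z⟩, p⟩ - hne heq
    obtain rfl : z = y := congrArg (·.1.1) heq
    simp [hq_self] at hne
  · rintro ⟨⟨y, z⟩, p⟩ ht
    simp only [mem_filter, mem_univ, true_and] at ht ⊢
    obtain rfl | hzy := eq_or_ne z y
    · rw [reroot_self ht.1.1]
      exact ht
    exact ⟨ht.1.reroot ht.2 hzy, reroot_apply_left⟩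
  · rintro ⟨⟨y, z⟩, p⟩ ht
    simp only [mem_filter, mem_univ, true_and] at ht
    simp [reroot_reroot ht.1.1 ht.2]

theorem stmt18_general (G : SimpleGraph V)
    (k : V → V → ℝ)
    (q : V → V → ℝ) (hqa : ∀ a b, q a b = - q b a)
    (x : V) :
    ∑ y, forestSum G k x y * (∑ z, k y z * q y z)
      = ∑ y, ∑ z,
          ∑ p ∈ Finset.univ.filter
              (fun p : V → V => IsTwoForestTo G x y p ∧ p z ≠ y),
            wt k p * k y z * q y z := by
  have hsplit : ∀ y z, ∑ p ∈ univ.filter (fun p : V → V => IsTwoForestTo G x y p),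
      wt k p * k y z * q y z
      = ∑ p ∈ univ.filter (fun p : V → V => IsTwoForestTo G x y p ∧ p z ≠ y),
          wt k p * k y z * q y z
        + ∑ p ∈ univ.filter (fun p : V → V => IsTwoForestTo G x y p ∧ p z = y),
          wt k p * k y z * q y z := by
    intro y z
    rw [← sum_filter_add_sum_filter_not _ (fun p : V → V => p z ≠ y), filter_filter,
      filter_filter]
    simp only [not_not]
  calc ∑ y, forestSum G k x y * (∑ z, k y z * q y z)
      = ∑ y, ∑ z, ∑ p ∈ univ.filter (fun p : V → V => IsTwoForestTo G x y p),
          wt k p * k y z * q y z := by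
        simp_rw [forestSum, sum_mul_sum, mul_assoc]
        exact sum_congr rfl fun y _ => sum_comm
    _ = _ := by
        simp_rw [hsplit, sum_add_distrib, sum_forest_reversed_edge_eq_zero G k q hqa x,
          add_zero]

/-- forest expansion of the power sum:
`Σ_y w(ℱ^{x→y}) P(y) = Σ_{z,y} Σ_{F ∈ ℱ^{x→y}, (z,y) ∉ F} w(F) k(y,z) q(y,z)`;
the terms where the reversed edge `(z,y)` lies in the forest cancel pairwise by the
antisymmetry of `q`. -/
theorem stmt18 (G : SimpleGraph V) (hG : G.Connected)
    (k : V → V → ℝ)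
    (hk : ∀ a b, 0 < k a b ↔ G.Adj a b)
    (hk0 : ∀ a b, ¬ G.Adj a b → k a b = 0)
    (q : V → V → ℝ) (hqa : ∀ a b, q a b = - q b a)
    (x : V) :
    ∑ y, forestSum G k x y * (∑ z, k y z * q y z)
      = ∑ y, ∑ z,
          ∑ p ∈ Finset.univ.filter
              (fun p : V → V => IsTwoForestTo G x y p ∧ p z ≠ y),
            wt k p * k y z * q y z :=
  stmt18_general G k q hqa x
end
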